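/- arXiv:0804.0637 — 5 statements merged into one kernel-verified Lean document; each statement's English description precedes it below -/
import Mathlib

section
/- Let L be an n-dimensional unimodular lattice with a 3-frame F = {f₁,…,fₙ}. Then the code C = π_F(L) = {((x,f₁) mod 3, …, (x,fₙ) mod 3) : x ∈ L} ⊆ 𝔽₃ⁿ is a ternary self-dual code, and the Construction A lattice A₃(C) is isomorphic to L (there is an orthogonal matrix A with A₃(C) = L·A). -/
open scoped BigOperators

namespace Ternary

/-- Hamming weight of a ternary vector. -/
def wt {n : ℕ} (x : Fin n → ZMod 3) : ℕ :=
  (Finset.filter (fun i => x i ≠ 0) Finset.univ).card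

/-- Dual of a set of ternary vectors under the standard inner product. -/
def dualCode {n : ℕ} (C : Set (Fin n → ZMod 3)) : Set (Fin n → ZMod 3) :=
  {x | ∀ y ∈ C, ∑ i, x i * y i = 0}

/-- A ternary self-dual code (self-duality forces linearity). -/
def IsSelfDual {n : ℕ} (C : Set (Fin n → ZMod 3)) : Prop :=
  dualCode C = C

/-- `C` has minimum weight `d`. -/
def HasMinWeight {n : ℕ} (C : Set (Fin n → ZMod 3)) (d : ℕ) : Prop :=
  (∃ x ∈ C, x ≠ 0 ∧ wt x = d) ∧ ∀ x ∈ C, x ≠ 0 → d ≤ wt x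

/-- A monomial matrix: exactly one nonzero entry in each row and each column. -/
def IsMonomial {n : ℕ} (P : Matrix (Fin n) (Fin n) (ZMod 3)) : Prop :=
  (∀ i, ∃! j, P i j ≠ 0) ∧ (∀ j, ∃! i, P i j ≠ 0)

/-- The code `C · P = {xP : x ∈ C}`. -/
def codeMul {n : ℕ} (C : Set (Fin n → ZMod 3)) (P : Matrix (Fin n) (Fin n) (ZMod 3)) :
    Set (Fin n → ZMod 3) :=
  (fun x => Matrix.vecMul x P) '' C

/-- Equivalence of ternary codes via monomial matrices. -/
def CodeEquiv {n : ℕ} (C C' : Set (Fin n → ZMod 3)) : Prop :=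
  ∃ P, IsMonomial P ∧ C' = codeMul C P

/-- Standard inner product on `ℝⁿ`. -/
noncomputable def ip {n : ℕ} (x y : Fin n → ℝ) : ℝ := ∑ i, x i * y i

/-- Construction A lattice `A₃(C) = (1/√3){x ∈ ℤⁿ : x mod 3 ∈ C}`. -/
def A3 {n : ℕ} (C : Set (Fin n → ZMod 3)) : Set (Fin n → ℝ) :=
  {v | ∃ y : Fin n → ℤ, (fun i => ((y i : ZMod 3))) ∈ C ∧
        v = fun i => (y i : ℝ) / Real.sqrt 3}

/-- The dual lattice (as a set): vectors with integral inner product with all of `L`. -/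
def dualLattice {n : ℕ} (L : Set (Fin n → ℝ)) : Set (Fin n → ℝ) :=
  {x | ∀ y ∈ L, ∃ m : ℤ, ip x y = (m : ℝ)}

/-- A 3-frame of `L`: vectors `f₁, …, fₙ ∈ L` with `(fᵢ, fⱼ) = 3δᵢⱼ`. -/
def IsFrame {n : ℕ} (L : Set (Fin n → ℝ)) (f : Fin n → Fin n → ℝ) : Prop :=
  (∀ i, f i ∈ L) ∧ ∀ i j, ip (f i) (f j) = if i = j then 3 else 0

/-- The map `π_F(x) = ((x,f₁) mod 3, …, (x,fₙ) mod 3)`, realized via `Int.floor`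
(which agrees with `(x, fᵢ)` whenever that inner product is an integer). -/
noncomputable def piF {n : ℕ} (f : Fin n → Fin n → ℝ) (x : Fin n → ℝ) :
    Fin n → ZMod 3 :=
  fun i => ((⌊ip x (f i)⌋ : ℤ) : ZMod 3)

/-- The even sublattice `B₃(C)` of `A₃(C)`. -/
def B3 {n : ℕ} (C : Set (Fin n → ZMod 3)) : Set (Fin n → ℝ) :=
  {v ∈ A3 C | ∃ m : ℤ, ip v v = 2 * (m : ℝ)}

/-- A decomposable code: a direct sum of two nonzero codes supported on
complementary sets of coordinates. -/
def IsDecomposableCode {n : ℕ} (C : Set (Fin n → ZMod 3)) : Prop :=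
  ∃ S : Set (Fin n),
    (∃ x ∈ C, x ≠ 0 ∧ ∀ i ∉ S, x i = 0) ∧
    (∃ x ∈ C, x ≠ 0 ∧ ∀ i ∈ S, x i = 0) ∧
    (∀ x ∈ C, S.indicator x ∈ C)

/-- A decomposable lattice: an orthogonal direct sum of two nonzero sublattices. -/
def IsDecomposableLattice {n : ℕ} (L : Set (Fin n → ℝ)) : Prop :=
  ∃ L₁ L₂ : Submodule ℤ (Fin n → ℝ),
    (L₁ : Set (Fin n → ℝ)) ⊆ L ∧ (L₂ : Set (Fin n → ℝ)) ⊆ L ∧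
    (∃ x ∈ L₁, x ≠ (0 : Fin n → ℝ)) ∧ (∃ x ∈ L₂, x ≠ (0 : Fin n → ℝ)) ∧
    (∀ a ∈ L₁, ∀ b ∈ L₂, ip a b = 0) ∧
    L = {x | ∃ a ∈ L₁, ∃ b ∈ L₂, x = a + b}

/-- The real all-ones vector. -/
def allOnesR (n : ℕ) : Fin n → ℝ := fun _ => 1

/-- The vector `e₁ = (√3, 0, …, 0)`. -/
noncomputable def e1 (n : ℕ) : Fin n → ℝ := fun i => if (i : ℕ) = 0 then Real.sqrt 3 else 0

/-- The straight construction `L_S(C) = ⟨(1/(2√3))𝟏, B₃(C)⟩`. -/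
noncomputable def LS {n : ℕ} (C : Set (Fin n → ZMod 3)) : Set (Fin n → ℝ) :=
  {x | ∃ (m : ℤ) (b : Fin n → ℝ), b ∈ B3 C ∧
        x = (m : ℝ) • ((2 * Real.sqrt 3)⁻¹ • allOnesR n) + b}

/-- The twisted construction `L_T(C) = ⟨(1/(2√3))𝟏 - e₁, B₃(C)⟩`. -/
noncomputable def LT {n : ℕ} (C : Set (Fin n → ZMod 3)) : Set (Fin n → ℝ) :=
  {x | ∃ (m : ℤ) (b : Fin n → ℝ), b ∈ B3 C ∧
        x = (m : ℝ) • ((2 * Real.sqrt 3)⁻¹ • allOnesR n - e1 n) + b}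



lemma ip_comm {n : ℕ} (x y : Fin n → ℝ) : ip x y = ip y x := by
  simp [ip, mul_comm]

lemma ip_add_left {n : ℕ} (x y z : Fin n → ℝ) : ip (x + y) z = ip x z + ip y z := by
  simp [ip, add_mul, Finset.sum_add_distrib]

lemma ip_zsmul_sum {n : ℕ} (k : Fin n → ℤ) (g : Fin n → Fin n → ℝ) (z : Fin n → ℝ) :
    ip (∑ i, k i • g i) z = ∑ i, (k i : ℝ) * ip (g i) z := by
  simp only [ip, Finset.sum_apply, Pi.smul_apply, zsmul_eq_mul, Finset.sum_mul]
  rw [Finset.sum_comm]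
  refine Finset.sum_congr rfl fun i _ => ?_
  rw [Finset.mul_sum]
  refine Finset.sum_congr rfl fun t _ => ?_
  simp only [Pi.mul_apply, Pi.intCast_apply]
  ring

lemma ip_orth {n : ℕ} (A : Matrix (Fin n) (Fin n) ℝ) (hA : A * A.transpose = 1)
    (x y : Fin n → ℝ) : ip (Matrix.vecMul x A) (Matrix.vecMul y A) = ip x y := by
  classical
  have hAe : ∀ i k, ∑ j, A i j * A k j = if i = k then (1:ℝ) else 0 := by
    intro i k
    have := congrArg (fun M => M i k) hA
    simpa [Matrix.mul_apply, Matrix.one_apply, Matrix.transpose_apply] using this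
  simp only [ip, Matrix.vecMul, dotProduct]
  calc ∑ j, (∑ i, x i * A i j) * (∑ k, y k * A k j)
      = ∑ j, ∑ i, ∑ k, (x i * y k) * (A i j * A k j) := by
        refine Finset.sum_congr rfl fun j _ => ?_
        rw [Finset.sum_mul_sum]
        exact Finset.sum_congr rfl fun i _ => Finset.sum_congr rfl fun k _ => by ring
    _ = ∑ i, ∑ k, (x i * y k) * ∑ j, A i j * A k j := by
        rw [Finset.sum_comm]
        refine Finset.sum_congr rfl fun i _ => ?_
        rw [Finset.sum_comm]
        exact Finset.sum_congr rfl fun k _ => (Finset.mul_sum _ _ _).symm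
    _ = ∑ i, x i * y i := by
        simp [hAe, mul_ite, Finset.sum_ite_eq]

/-- If `L` is an `n`-dimensional unimodular lattice with a
3-frame `F = {f₁,…,fₙ}`, then `π_F(L)` is a ternary self-dual code and
`A₃(π_F(L))` is isomorphic to `L` via an orthogonal matrix. -/
theorem frame_code_selfdual_and_A3_iso (n : ℕ) (L : Submodule ℤ (Fin n → ℝ))
    (hU : dualLattice (L : Set (Fin n → ℝ)) = (L : Set (Fin n → ℝ)))
    (f : Fin n → Fin n → ℝ) (hf : IsFrame (L : Set (Fin n → ℝ)) f) :
    IsSelfDual (piF f '' (L : Set (Fin n → ℝ))) ∧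
    ∃ A : Matrix (Fin n) (Fin n) ℝ, A.transpose * A = 1 ∧
      A3 (piF f '' (L : Set (Fin n → ℝ)))
        = (fun x => Matrix.vecMul x A) '' (L : Set (Fin n → ℝ)) := by
  classical
  obtain ⟨hfL, hfip⟩ := hf
  have hs2 : Real.sqrt 3 * Real.sqrt 3 = 3 := Real.mul_self_sqrt (by norm_num)
  have hs0 : Real.sqrt 3 ≠ 0 := by
    intro h; rw [h] at hs2; norm_num at hs2
  have hintf : ∀ x ∈ (L : Set (Fin n → ℝ)), ∀ i, ip x (f i) = (⌊ip x (f i)⌋ : ℝ) := by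
    intro x hx i
    have h1 : f i ∈ dualLattice (L : Set (Fin n → ℝ)) := by rw [hU]; exact hfL i
    obtain ⟨m, hm⟩ := h1 x hx
    have hm' : ip x (f i) = (m : ℝ) := by rw [ip_comm]; exact hm
    rw [hm', Int.floor_intCast]
  have hintL : ∀ x ∈ (L : Set (Fin n → ℝ)), ∀ y ∈ (L : Set (Fin n → ℝ)),
      ∃ m : ℤ, ip x y = (m : ℝ) := by
    intro x hx y hy
    have h1 : x ∈ dualLattice (L : Set (Fin n → ℝ)) := by rw [hU]; exact hx
    exact h1 y hy
  set A : Matrix (Fin n) (Fin n) ℝ := Matrix.of fun i j => f j i / Real.sqrt 3 with hAdef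
  have key : ∀ k l, ∑ i, f k i / Real.sqrt 3 * (f l i / Real.sqrt 3)
      = if k = l then (1:ℝ) else 0 := by
    intro k l
    have h1 : ∀ i, f k i / Real.sqrt 3 * (f l i / Real.sqrt 3) = f k i * f l i / 3 := by
      intro i
      rw [div_mul_div_comm, hs2]
    rw [Finset.sum_congr rfl fun i _ => h1 i, ← Finset.sum_div]
    have h2 := hfip k l
    simp only [ip] at h2
    rw [h2]
    split_ifs <;> norm_num
  have hAtA : A.transpose * A = 1 := by
    ext k l
    simp only [Matrix.mul_apply, Matrix.transpose_apply, Matrix.one_apply, hAdef,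
      Matrix.of_apply]
    exact key k l
  have hAAt : A * A.transpose = 1 := mul_eq_one_comm.mpr hAtA
  have hvec : ∀ (x : Fin n → ℝ) (j : Fin n),
      Matrix.vecMul x A j = ip x (f j) / Real.sqrt 3 := by
    intro x j
    simp only [Matrix.vecMul, dotProduct, hAdef, Matrix.of_apply]
    rw [ip, Finset.sum_div]
    exact Finset.sum_congr rfl fun i _ => (mul_div_assoc _ _ _).symm
  set C : Set (Fin n → ZMod 3) := piF f '' (L : Set (Fin n → ℝ)) with hCdef
  have himg : A3 C = (fun x => Matrix.vecMul x A) '' (L : Set (Fin n → ℝ)) := by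
    ext v
    constructor
    · rintro ⟨y, hyC, rfl⟩
      obtain ⟨x, hxL, hx⟩ := hyC
      have hdvd : ∀ i, (3:ℤ) ∣ (y i - ⌊ip x (f i)⌋) := by
        intro i
        have h1 : ((⌊ip x (f i)⌋ : ℤ) : ZMod 3) = ((y i : ℤ) : ZMod 3) := by
          have := congrFun hx i
          simpa [piF] using this
        have h3 : ((y i - ⌊ip x (f i)⌋ : ℤ) : ZMod 3) = 0 := by
          push_cast
          rw [h1, sub_self]
        exact (ZMod.intCast_zmod_eq_zero_iff_dvd _ 3).mp h3
      choose k hk using hdvd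
      refine ⟨x + ∑ i, k i • f i,
        L.add_mem hxL (Submodule.sum_mem _ fun i _ => L.smul_mem _ (hfL i)), ?_⟩
      funext j
      show Matrix.vecMul _ A j = _
      rw [hvec]
      have h4 : ip (x + ∑ i, k i • f i) (f j) = (y j : ℝ) := by
        rw [ip_add_left, ip_zsmul_sum]
        have h5 : ∑ i, (k i : ℝ) * ip (f i) (f j) = 3 * (k j : ℝ) := by
          simp only [hfip, mul_ite, mul_zero]
          rw [Finset.sum_ite_eq' Finset.univ j fun i => (k i : ℝ) * 3]
          simp [mul_comm]
        rw [h5, hintf x hxL j]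
        have h6 : y j = ⌊ip x (f j)⌋ + 3 * k j := by
          have := hk j; omega
        rw [h6]; push_cast; ring
      rw [h4]
    · rintro ⟨x, hxL, rfl⟩
      refine ⟨fun i => ⌊ip x (f i)⌋, ⟨x, hxL, rfl⟩, ?_⟩
      funext j
      show Matrix.vecMul _ A j = _
      rw [hvec]
      conv_lhs => rw [hintf x hxL j]
  have hsub1 : C ⊆ dualCode C := by
    rintro c ⟨x, hxL, rfl⟩
    rintro c' ⟨y, hyL, rfl⟩
    obtain ⟨m, hm⟩ := hintL x hxL y hyL
    have h1 : (∑ j, (⌊ip x (f j)⌋ : ℝ) * (⌊ip y (f j)⌋ : ℝ)) = 3 * (m : ℝ) := by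
      have h2 := ip_orth A hAAt x y
      have h3 : ip (Matrix.vecMul x A) (Matrix.vecMul y A)
          = (∑ j, (⌊ip x (f j)⌋ : ℝ) * (⌊ip y (f j)⌋ : ℝ)) / 3 := by
        rw [ip, Finset.sum_div]
        refine Finset.sum_congr rfl fun j _ => ?_
        rw [hvec, hvec]
        conv_lhs => rw [hintf x hxL j, hintf y hyL j]
        rw [div_mul_div_comm, hs2]
      rw [h3, hm] at h2
      field_simp at h2
      linarith
    have h4 : (∑ j, ⌊ip x (f j)⌋ * ⌊ip y (f j)⌋ : ℤ) = 3 * m := by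
      have h5 : ((∑ j, ⌊ip x (f j)⌋ * ⌊ip y (f j)⌋ : ℤ) : ℝ) = ((3 * m : ℤ) : ℝ) := by
        push_cast
        rw [h1]
      exact_mod_cast h5
    show ∑ j, piF f x j * piF f y j = 0
    simp only [piF]
    have h6 : ∑ j, ((⌊ip x (f j)⌋ : ZMod 3)) * ((⌊ip y (f j)⌋ : ZMod 3))
        = ((∑ j, ⌊ip x (f j)⌋ * ⌊ip y (f j)⌋ : ℤ) : ZMod 3) := by
      push_cast; rfl
    rw [h6, h4]
    simpa using (ZMod.intCast_zmod_eq_zero_iff_dvd (3 * m) 3).mpr ⟨m, rfl⟩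
  have hdualL : dualLattice ((fun x => Matrix.vecMul x A) '' (L : Set (Fin n → ℝ)))
      ⊆ (fun x => Matrix.vecMul x A) '' (L : Set (Fin n → ℝ)) := by
    intro w hw
    have hu : Matrix.vecMul (Matrix.vecMul w A.transpose) A = w := by
      rw [Matrix.vecMul_vecMul, hAtA, Matrix.vecMul_one]
    have huD : Matrix.vecMul w A.transpose ∈ dualLattice (L : Set (Fin n → ℝ)) := by
      intro y hy
      obtain ⟨m, hm⟩ := hw (Matrix.vecMul y A) ⟨y, hy, rfl⟩
      refine ⟨m, ?_⟩
      rw [← ip_orth A hAAt (Matrix.vecMul w A.transpose) y, hu]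
      exact hm
    rw [hU] at huD
    exact ⟨_, huD, hu⟩
  have hsub2 : dualCode C ⊆ C := by
    intro z hz
    set w : Fin n → ℝ := fun i => (((z i).val : ℤ) : ℝ) / Real.sqrt 3 with hwdef
    have hwD : w ∈ dualLattice (A3 C) := by
      rintro v ⟨y, hyC, rfl⟩
      have h0 : ∑ i, z i * ((y i : ZMod 3)) = 0 := hz _ hyC
      have h1 : ((∑ i, ((z i).val : ℤ) * y i : ℤ) : ZMod 3) = 0 := by
        push_cast
        simpa [ZMod.natCast_val, ZMod.cast_id] using h0
      obtain ⟨m, hm⟩ := (ZMod.intCast_zmod_eq_zero_iff_dvd _ 3).mp h1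
      refine ⟨m, ?_⟩
      have h2 : ip w (fun i => (y i : ℝ) / Real.sqrt 3)
          = (∑ i, (((z i).val : ℤ) : ℝ) * (y i : ℝ)) / 3 := by
        rw [ip, Finset.sum_div]
        refine Finset.sum_congr rfl fun i _ => ?_
        rw [hwdef]
        rw [div_mul_div_comm, hs2]
      rw [h2]
      have h3 : (∑ i, (((z i).val : ℤ) : ℝ) * (y i : ℝ)) = ((3 * m : ℤ) : ℝ) := by
        have h3' : (∑ i, ((z i).val : ℤ) * y i) = 3 * m := by exact_mod_cast hm
        rw [← h3']; push_cast; ring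
      rw [h3]; push_cast; ring
    have hwA : w ∈ A3 C := by
      rw [himg]
      refine hdualL ?_
      rw [← himg]
      exact hwD
    obtain ⟨y', hy'C, hy'⟩ := hwA
    have hyz : ∀ i, y' i = ((z i).val : ℤ) := by
      intro i
      have h4 := congrFun hy' i
      have h5 : (((z i).val : ℤ) : ℝ) / Real.sqrt 3 = (y' i : ℝ) / Real.sqrt 3 := h4
      have h6 : (((z i).val : ℤ) : ℝ) = (y' i : ℝ) := by
        field_simp at h5
        exact h5
      exact_mod_cast h6.symm
    have h7 : (fun i => ((y' i : ZMod 3))) = z := by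
      funext i
      rw [hyz i]
      push_cast
      simp [ZMod.natCast_val, ZMod.cast_id]
    rw [← h7]
    exact hy'C
  exact ⟨Set.Subset.antisymm hsub2 hsub1, A, hAtA, himg⟩


end Ternary
end

section
/- Let L be an n-dimensional integral lattice, and let F = {f₁,…,fₙ} and F' = {f'₁,…,f'ₙ} be 3-frames of L. Then the ternary codes π_F(L) and π_{F'}(L) are equivalent if and only if there exists an orthogonal matrix P ∈ Aut(L) such that {±f₁,…,±fₙ}·P = {±f'₁,…,±f'ₙ}. -/
open scoped BigOperators

namespace Ternary

section Aux
open Matrix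

variable {n : ℕ}

lemma ip_eq_dot (x y : Fin n → ℝ) : ip x y = dotProduct x y := rfl

lemma ip_vecMul_right (x y : Fin n → ℝ) (P : Matrix (Fin n) (Fin n) ℝ) :
    ip x (y ᵥ* P) = ip (x ᵥ* Pᵀ) y := by
  rw [ip_eq_dot, ip_eq_dot, ← Matrix.mulVec_transpose, Matrix.dotProduct_mulVec]

lemma ip_vecMul_vecMul {P : Matrix (Fin n) (Fin n) ℝ} (h : P * Pᵀ = 1)
    (x y : Fin n → ℝ) : ip (x ᵥ* P) (y ᵥ* P) = ip x y := by
  rw [ip_vecMul_right, Matrix.vecMul_vecMul, h, Matrix.vecMul_one]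

lemma vecMul_smulMat (v : Fin n → ℝ) (c : ℝ) (M : Matrix (Fin n) (Fin n) ℝ) :
    v ᵥ* (c • M) = c • (v ᵥ* M) := by
  ext j
  simp only [Matrix.vecMul, dotProduct, Matrix.smul_apply, Pi.smul_apply,
    smul_eq_mul, Finset.mul_sum]
  exact Finset.sum_congr rfl fun i _ => by ring

lemma frame_mul_transpose {L : Set (Fin n → ℝ)} {f : Fin n → Fin n → ℝ}
    (hf : IsFrame L f) : Matrix.of f * (Matrix.of f)ᵀ = (3:ℝ) • 1 := by
  ext i j
  have h := hf.2 i j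
  simp only [ip] at h
  simp only [Matrix.mul_apply, Matrix.transpose_apply, Matrix.of_apply,
    Matrix.smul_apply, Matrix.one_apply, smul_eq_mul]
  rw [h]
  split <;> simp

lemma frame_transpose_mul {L : Set (Fin n → ℝ)} {f : Fin n → Fin n → ℝ}
    (hf : IsFrame L f) : (Matrix.of f)ᵀ * Matrix.of f = (3:ℝ) • 1 := by
  have h1 : Matrix.of f * ((3:ℝ)⁻¹ • (Matrix.of f)ᵀ) = 1 := by
    rw [Matrix.mul_smul, frame_mul_transpose hf, smul_smul]
    norm_num
  have h2 := mul_eq_one_comm.mp h1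
  calc (Matrix.of f)ᵀ * Matrix.of f
      = (3:ℝ) • (((3:ℝ)⁻¹ • (Matrix.of f)ᵀ) * Matrix.of f) := by
        rw [Matrix.smul_mul, smul_smul]; norm_num
    _ = (3:ℝ) • (1 : Matrix (Fin n) (Fin n) ℝ) := by rw [h2]

lemma frame_decomp {L : Set (Fin n → ℝ)} {f : Fin n → Fin n → ℝ}
    (hf : IsFrame L f) (x : Fin n → ℝ) :
    x = (fun i => (3:ℝ)⁻¹ * ip x (f i)) ᵥ* Matrix.of f := by
  have h0 : (fun i => (3:ℝ)⁻¹ * ip x (f i)) = x ᵥ* ((3:ℝ)⁻¹ • (Matrix.of f)ᵀ) := by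
    rw [vecMul_smulMat]
    funext i
    simp only [Pi.smul_apply, smul_eq_mul, Matrix.vecMul, dotProduct,
      Matrix.transpose_apply, Matrix.of_apply, ip]
  rw [h0, Matrix.vecMul_vecMul, Matrix.smul_mul, frame_transpose_mul hf, smul_smul]
  norm_num

variable {L : Submodule ℤ (Fin n → ℝ)} {f f' : Fin n → Fin n → ℝ}

lemma ip_floor_cast (hInt : ∀ x ∈ L, ∀ y ∈ L, ∃ m : ℤ, ip x y = (m : ℝ))
    {x y : Fin n → ℝ} (hx : x ∈ L) (hy : y ∈ L) :
    ((⌊ip x y⌋ : ℤ) : ℝ) = ip x y := by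
  obtain ⟨m, hm⟩ := hInt x hx y hy
  rw [hm, Int.floor_intCast]

lemma exists_coords (hInt : ∀ x ∈ L, ∀ y ∈ L, ∃ m : ℤ, ip x y = (m : ℝ))
    (hf : IsFrame (L : Set (Fin n → ℝ)) f) {x : Fin n → ℝ} (hx : x ∈ L) :
    ∃ a : Fin n → ℤ, (fun i => ((a i : ZMod 3))) ∈ piF f '' (L : Set (Fin n → ℝ)) ∧
      x = (fun i => (3:ℝ)⁻¹ * (a i : ℝ)) ᵥ* Matrix.of f := by
  refine ⟨fun i => ⌊ip x (f i)⌋, ⟨x, hx, rfl⟩, ?_⟩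
  rw [show (fun i => (3:ℝ)⁻¹ * ((⌊ip x (f i)⌋ : ℤ) : ℝ))
      = fun i => (3:ℝ)⁻¹ * ip x (f i) from
    funext fun i => by rw [ip_floor_cast hInt hx (hf.1 i)]]
  exact frame_decomp hf x

lemma coords_mem (hInt : ∀ x ∈ L, ∀ y ∈ L, ∃ m : ℤ, ip x y = (m : ℝ))
    (hf : IsFrame (L : Set (Fin n → ℝ)) f) (a : Fin n → ℤ)
    (ha : (fun i => ((a i : ZMod 3))) ∈ piF f '' (L : Set (Fin n → ℝ))) :
    (fun i => (3:ℝ)⁻¹ * (a i : ℝ)) ᵥ* Matrix.of f ∈ L := by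
  obtain ⟨y, hy, hya⟩ := ha
  have hba : ∀ i, ((⌊ip y (f i)⌋ : ℤ) : ZMod 3) = (a i : ZMod 3) := fun i =>
    congrFun hya i
  have hdvd : ∀ i, ∃ c : ℤ, a i = ⌊ip y (f i)⌋ + 3 * c := by
    intro i
    have h3 : ((a i - ⌊ip y (f i)⌋ : ℤ) : ZMod 3) = 0 := by
      push_cast
      rw [← hba i]
      ring
    obtain ⟨c, hc⟩ := (ZMod.intCast_zmod_eq_zero_iff_dvd _ 3).mp h3
    exact ⟨c, by omega⟩
  choose c hc using hdvd
  have key : (fun i => (3:ℝ)⁻¹ * (a i : ℝ)) ᵥ* Matrix.of f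
      = y + ∑ i, c i • f i := by
    conv_rhs => rw [frame_decomp hf y]
    funext j
    simp only [Matrix.vecMul, dotProduct, Matrix.of_apply, Pi.add_apply,
      Finset.sum_apply, Pi.smul_apply]
    rw [← Finset.sum_add_distrib]
    refine Finset.sum_congr rfl fun i _ => ?_
    have hb : ip y (f i) = ((⌊ip y (f i)⌋ : ℤ) : ℝ) := (ip_floor_cast hInt hy (hf.1 i)).symm
    rw [zsmul_eq_mul, hb, hc i]
    push_cast
    ring
  rw [key]
  exact L.add_mem hy (Submodule.sum_mem L fun i _ => Submodule.smul_mem L (c i) (hf.1 i))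

lemma frame_mul_tmul (hf : IsFrame (L : Set (Fin n → ℝ)) f)
    (M : Matrix (Fin n) (Fin n) ℝ) :
    Matrix.of f * ((Matrix.of f)ᵀ * M) = (3:ℝ) • M := by
  rw [← Matrix.mul_assoc, frame_mul_transpose hf, Matrix.smul_mul, Matrix.one_mul]

lemma frame_mul_inv_mul (hf : IsFrame (L : Set (Fin n → ℝ)) f)
    (M : Matrix (Fin n) (Fin n) ℝ) :
    Matrix.of f * (((3:ℝ)⁻¹ • (Matrix.of f)ᵀ) * M) = M := by
  rw [← Matrix.mul_assoc, Matrix.mul_smul, frame_mul_transpose hf, smul_smul]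
  norm_num

lemma vecMul_int_cast (a : Fin n → ℤ) (D : Matrix (Fin n) (Fin n) ℤ) :
    (fun j => (((a ᵥ* D) j : ℤ) : ZMod 3))
      = (fun i => ((a i : ZMod 3))) ᵥ* (D.map ((Int.cast : ℤ → ZMod 3))) := by
  funext j
  simp only [Matrix.vecMul, dotProduct, Matrix.map_apply]
  push_cast
  rfl

lemma map_into (hInt : ∀ x ∈ L, ∀ y ∈ L, ∃ m : ℤ, ip x y = (m : ℝ))
    (hf : IsFrame (L : Set (Fin n → ℝ)) f) (hf' : IsFrame (L : Set (Fin n → ℝ)) f')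
    (D : Matrix (Fin n) (Fin n) ℤ)
    (hC : ∀ a : Fin n → ℤ, (fun i => ((a i : ZMod 3))) ∈ piF f '' (L : Set (Fin n → ℝ)) →
        (fun j => (((a ᵥ* D) j : ZMod 3))) ∈ piF f' '' (L : Set (Fin n → ℝ)))
    {x : Fin n → ℝ} (hx : x ∈ L) :
    x ᵥ* (((3:ℝ)⁻¹ • (Matrix.of f)ᵀ) * (D.map ((Int.cast : ℤ → ℝ))) * Matrix.of f') ∈ L := by
  obtain ⟨a, haC, hax⟩ := exists_coords hInt hf hx
  rw [hax, Matrix.mul_assoc, Matrix.vecMul_vecMul, frame_mul_inv_mul hf,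
    ← Matrix.vecMul_vecMul]
  have hcoef : (fun i => (3:ℝ)⁻¹ * (a i : ℝ)) ᵥ* D.map ((Int.cast : ℤ → ℝ))
      = fun j => (3:ℝ)⁻¹ * (((a ᵥ* D) j : ℤ) : ℝ) := by
    funext j
    simp only [Matrix.vecMul, dotProduct, Matrix.map_apply]
    push_cast
    rw [Finset.mul_sum]
    exact Finset.sum_congr rfl fun i _ => by ring
  rw [hcoef]
  exact coords_mem hInt hf' (a ᵥ* D) (hC a haC)

lemma monomial_data {Q : Matrix (Fin n) (Fin n) (ZMod 3)} (hQ : IsMonomial Q) :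
    ∃ (σ : Fin n → Fin n) (ε : Fin n → ℤ),
      Function.Bijective σ ∧ (∀ i, ε i = 1 ∨ ε i = -1) ∧
      (∀ i j, Q i j = if j = σ i then ((ε i : ℤ) : ZMod 3) else 0) := by
  classical
  choose σ hσ1 hσ2 using hQ.1
  simp only at hσ1 hσ2
  have hval : ∀ z : ZMod 3, z ≠ 0 → z = ((1:ℤ) : ZMod 3) ∨ z = ((-1:ℤ) : ZMod 3) := by decide
  refine ⟨σ, fun i => if Q i (σ i) = ((1:ℤ) : ZMod 3) then 1 else -1, ?_, ?_, ?_⟩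
  · rw [← Finite.injective_iff_bijective]
    intro i k hik
    obtain ⟨i₀, -, hu⟩ := hQ.2 (σ i)
    have h1 : i = i₀ := hu i (hσ1 i)
    have h2 : k = i₀ := hu k (by rw [hik]; exact hσ1 k)
    rw [h1, h2]
  · intro i
    by_cases h : Q i (σ i) = ((1:ℤ) : ZMod 3)
    · exact Or.inl (if_pos h)
    · exact Or.inr (if_neg h)
  · intro i j
    by_cases hj : j = σ i
    · subst hj
      rw [if_pos rfl]
      beta_reduce
      rcases hval _ (hσ1 i) with h | h
      · rw [if_pos h]; exact h
      · rw [if_neg (show ¬ Q i (σ i) = ((1:ℤ) : ZMod 3) by rw [h]; decide)]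
        exact h
    · rw [if_neg hj]
      by_contra hne
      exact hj (hσ2 i j hne)

/-- The signed permutation integer matrix attached to `σ, ε`. -/
def sgnPerm (σ : Fin n → Fin n) (ε : Fin n → ℤ) : Matrix (Fin n) (Fin n) ℤ :=
  Matrix.of fun i j => if j = σ i then ε i else 0

lemma sgnPerm_mul_transpose {σ : Fin n → Fin n} {ε : Fin n → ℤ}
    (hσ : Function.Injective σ) (hε : ∀ i, ε i = 1 ∨ ε i = -1) :
    sgnPerm σ ε * (sgnPerm σ ε)ᵀ = 1 := by
  ext i k
  simp only [Matrix.mul_apply, sgnPerm, Matrix.transpose_apply, Matrix.of_apply,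
    ite_mul, zero_mul, mul_ite, mul_zero]
  rw [Finset.sum_eq_single (σ i)]
  · by_cases hik : i = k
    · subst hik
      rw [if_pos rfl, if_pos rfl, Matrix.one_apply_eq]
      rcases hε i with h | h <;> rw [h] <;> norm_num
    · rw [if_pos rfl, if_neg (fun h => hik (hσ h)), Matrix.one_apply_ne hik]
  · intro j _ hj
    simp [hj]
  · intro h
    exact absurd (Finset.mem_univ (σ i)) h

lemma map_cast_mul {R : Type*} [CommRing R] (A B : Matrix (Fin n) (Fin n) ℤ) :
    (A * B).map ((Int.cast : ℤ → R)) = A.map Int.cast * B.map Int.cast := by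
  have h := Matrix.map_mul (L := A) (M := B) (f := Int.castRingHom R)
  simpa using h

lemma map_cast_one {R : Type*} [CommRing R] :
    ((1 : Matrix (Fin n) (Fin n) ℤ).map ((Int.cast : ℤ → R))) = 1 :=
  Matrix.map_one _ Int.cast_zero Int.cast_one

lemma frame_codes_equivalent_iff_aux
    (hInt : ∀ x ∈ L, ∀ y ∈ L, ∃ m : ℤ, ip x y = (m : ℝ))
    (hf : IsFrame (L : Set (Fin n → ℝ)) f)
    (hf' : IsFrame (L : Set (Fin n → ℝ)) f') :
    CodeEquiv (piF f '' (L : Set (Fin n → ℝ))) (piF f' '' (L : Set (Fin n → ℝ)))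
      ↔ ∃ P : Matrix (Fin n) (Fin n) ℝ, P.transpose * P = 1 ∧
          (fun x => Matrix.vecMul x P) '' (L : Set (Fin n → ℝ)) = (L : Set (Fin n → ℝ)) ∧
          (fun x => Matrix.vecMul x P) '' {x | ∃ i, x = f i ∨ x = -f i}
            = {x | ∃ i, x = f' i ∨ x = -f' i} := by
  constructor
  · rintro ⟨Q, hQ, hcode⟩
    obtain ⟨σ, ε, hσ, hε, hQform⟩ := monomial_data hQ
    have hQmap : Q = (sgnPerm σ ε).map ((Int.cast : ℤ → ZMod 3)) := by
      ext i j
      rw [hQform i j]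
      simp [sgnPerm, apply_ite ((Int.cast : ℤ → ZMod 3))]
    set D : Matrix (Fin n) (Fin n) ℤ := sgnPerm σ ε with hD
    have hDDt : D * Dᵀ = 1 := sgnPerm_mul_transpose hσ.injective hε
    have hDtD : Dᵀ * D = 1 := mul_eq_one_comm.mp hDDt
    set Dr : Matrix (Fin n) (Fin n) ℝ := D.map (Int.cast : ℤ → ℝ) with hDr
    have hDrt : Drᵀ = Dᵀ.map (Int.cast : ℤ → ℝ) := (Matrix.transpose_map).symm
    have hDrtDr : Drᵀ * Dr = 1 := by
      rw [hDrt, hDr, ← map_cast_mul, hDtD, map_cast_one]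
    set P : Matrix (Fin n) (Fin n) ℝ :=
      ((3:ℝ)⁻¹ • (Matrix.of f)ᵀ) * Dr * Matrix.of f' with hP
    have hPo : Pᵀ * P = 1 := by
      rw [hP]
      simp only [Matrix.transpose_mul, Matrix.transpose_smul, Matrix.transpose_transpose,
        Matrix.smul_mul, Matrix.mul_smul, Matrix.mul_assoc, smul_smul]
      rw [frame_mul_tmul hf]
      simp only [Matrix.mul_smul, smul_smul]
      rw [← Matrix.mul_assoc Drᵀ Dr (Matrix.of f'), hDrtDr, Matrix.one_mul,
        frame_transpose_mul hf', smul_smul]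
      norm_num
    -- the code-level transfer hypotheses
    have hCD : ∀ a : Fin n → ℤ,
        (fun i => ((a i : ZMod 3))) ∈ piF f '' (L : Set (Fin n → ℝ)) →
        (fun j => (((a ᵥ* D) j : ZMod 3))) ∈ piF f' '' (L : Set (Fin n → ℝ)) := by
      intro a ha
      rw [vecMul_int_cast, ← hQmap, hcode]
      exact ⟨_, ha, rfl⟩
    have hCDt : ∀ a : Fin n → ℤ,
        (fun i => ((a i : ZMod 3))) ∈ piF f' '' (L : Set (Fin n → ℝ)) →
        (fun j => (((a ᵥ* Dᵀ) j : ZMod 3))) ∈ piF f '' (L : Set (Fin n → ℝ)) := by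
      intro a ha
      rw [hcode] at ha
      obtain ⟨c, hc, hceq⟩ := ha
      rw [vecMul_int_cast, ← hceq, Matrix.vecMul_vecMul, hQmap, ← map_cast_mul,
        hDDt, map_cast_one, Matrix.vecMul_one]
      exact hc
    have hPt : Pᵀ = ((3:ℝ)⁻¹ • (Matrix.of f')ᵀ) * (Dᵀ.map (Int.cast : ℤ → ℝ)) * Matrix.of f := by
      rw [hP, ← hDrt]
      simp only [Matrix.transpose_mul, Matrix.transpose_smul, Matrix.transpose_transpose,
        Matrix.smul_mul, Matrix.mul_smul, Matrix.mul_assoc]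
    have himg : (fun x => Matrix.vecMul x P) '' (L : Set (Fin n → ℝ))
        = (L : Set (Fin n → ℝ)) := by
      apply Set.Subset.antisymm
      · rintro x ⟨y, hy, rfl⟩
        exact map_into hInt hf hf' D hCD hy
      · intro x hx
        refine ⟨x ᵥ* Pᵀ, ?_, ?_⟩
        · rw [hPt]
          exact map_into hInt hf' hf Dᵀ hCDt hx
        · show (x ᵥ* Pᵀ) ᵥ* P = x
          rw [Matrix.vecMul_vecMul, hPo, Matrix.vecMul_one]
    have hfP : ∀ i, f i ᵥ* P = fun j => (ε i : ℝ) * f' (σ i) j := by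
      intro i
      have hrow : f i ᵥ* P = (Matrix.of f * P) i := by
        funext j
        simp [Matrix.mul_apply, Matrix.vecMul, dotProduct]
      have hFP : Matrix.of f * P = Dr * Matrix.of f' := by
        rw [hP, Matrix.mul_assoc, frame_mul_inv_mul hf]
      rw [hrow, hFP]
      funext j
      simp only [Matrix.mul_apply, hDr, hD, sgnPerm, Matrix.map_apply, Matrix.of_apply]
      rw [Finset.sum_eq_single (σ i)]
      · rw [if_pos rfl]
      · intro k _ hk
        rw [if_neg hk]
        push_cast
        ring
      · intro h
        exact absurd (Finset.mem_univ (σ i)) h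
    refine ⟨P, hPo, himg, ?_⟩
    ext x
    simp only [Set.mem_image, Set.mem_setOf_eq]
    constructor
    · rintro ⟨v, ⟨i, hv | hv⟩, rfl⟩
      · refine ⟨σ i, ?_⟩
        rw [hv, hfP i]
        rcases hε i with h | h
        · left; funext j; rw [h]; push_cast; ring
        · right; funext j; rw [h]; push_cast; simp
      · refine ⟨σ i, ?_⟩
        rw [hv, Matrix.neg_vecMul, hfP i]
        rcases hε i with h | h
        · right; funext j; rw [h]; push_cast; simp
        · left; funext j; rw [h]; push_cast; simp
    · rintro ⟨j, hx | hx⟩ <;> obtain ⟨i, rfl⟩ := hσ.surjective j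
      · rcases hε i with h | h
        · refine ⟨f i, ⟨i, Or.inl rfl⟩, ?_⟩
          rw [hfP i, hx]; funext k; rw [h]; push_cast; ring
        · refine ⟨-f i, ⟨i, Or.inr rfl⟩, ?_⟩
          rw [Matrix.neg_vecMul, hfP i, hx]; funext k; rw [h]; push_cast; simp
      · rcases hε i with h | h
        · refine ⟨-f i, ⟨i, Or.inr rfl⟩, ?_⟩
          rw [Matrix.neg_vecMul, hfP i, hx]; funext k; rw [h]; push_cast; simp
        · refine ⟨f i, ⟨i, Or.inl rfl⟩, ?_⟩
          rw [hfP i, hx]; funext k; rw [h]; push_cast; simp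
  · rintro ⟨P, hPo, hLP, hFP⟩
    classical
    have hPPt : P * Pᵀ = 1 := mul_eq_one_comm.mp hPo
    have hip : ∀ x y : Fin n → ℝ, ip (x ᵥ* P) (y ᵥ* P) = ip x y :=
      ip_vecMul_vecMul hPPt
    have hipr : ∀ (c : ℝ) (u v : Fin n → ℝ), ip u (fun k => c * v k) = c * ip u v := by
      intro c u v
      simp only [ip]
      rw [Finset.mul_sum]
      exact Finset.sum_congr rfl fun k _ => by ring
    have hmap : ∀ i, ∃ j, f i ᵥ* P = f' j ∨ f i ᵥ* P = -f' j := by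
      intro i
      have hmem : f i ᵥ* P ∈ {x | ∃ i, x = f' i ∨ x = -f' i} := by
        rw [← hFP]
        exact ⟨f i, ⟨i, Or.inl rfl⟩, rfl⟩
      obtain ⟨j, hj | hj⟩ := hmem
      exacts [⟨j, Or.inl hj⟩, ⟨j, Or.inr hj⟩]
    choose σ hσ0 using hmap
    set ε : Fin n → ℤ := fun i => if f i ᵥ* P = f' (σ i) then 1 else -1 with hεdef
    have hεpm : ∀ i, ε i = 1 ∨ ε i = -1 := by
      intro i
      by_cases h : f i ᵥ* P = f' (σ i)
      · exact Or.inl (by simp [hεdef, h])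
      · exact Or.inr (by simp [hεdef, h])
    have hkey : ∀ i, f i ᵥ* P = fun k => (ε i : ℝ) * f' (σ i) k := by
      intro i
      by_cases h : f i ᵥ* P = f' (σ i)
      · rw [h]
        funext k
        simp [hεdef, h]
      · rcases hσ0 i with h' | h'
        · exact absurd h' h
        · rw [h']
          funext k
          simp [hεdef, h]
    have hεsq : ∀ i, (ε i : ℝ) * (ε i : ℝ) = 1 := by
      intro i
      rcases hεpm i with h | h <;> rw [h] <;> norm_num
    have hσinj : Function.Injective σ := by
      intro i k hik
      by_contra hne
      have h0 : ip (f i ᵥ* P) (f k ᵥ* P) = 0 := by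
        rw [hip]
        have := hf.2 i k
        rwa [if_neg hne] at this
      have h3 : ip (f' (σ k)) (f' (σ k)) = 3 := by
        have := hf'.2 (σ k) (σ k)
        rwa [if_pos rfl] at this
      have hiplin : ∀ (c d : ℝ) (u v : Fin n → ℝ),
          ip (fun k => c * u k) (fun k => d * v k) = c * (d * ip u v) := by
        intro c d u v
        simp only [ip]
        rw [Finset.mul_sum]
        simp only [← Finset.mul_sum]
        rw [Finset.mul_sum, Finset.mul_sum]
        exact Finset.sum_congr rfl fun m _ => by ring
      rw [hkey i, hkey k, hik, hiplin, h3] at h0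
      rcases hεpm i with h | h <;> rcases hεpm k with h' | h' <;>
        rw [h, h'] at h0 <;> norm_num at h0
    have hσbij : Function.Bijective σ := Finite.injective_iff_bijective.mp hσinj
    set Q : Matrix (Fin n) (Fin n) (ZMod 3) :=
      Matrix.of fun i j => if j = σ i then ((ε i : ℤ) : ZMod 3) else 0 with hQdef
    have hQentry : ∀ i j, Q i j = if j = σ i then ((ε i : ℤ) : ZMod 3) else 0 :=
      fun i j => rfl
    have hQne : ∀ i, Q i (σ i) ≠ 0 := by
      intro i
      rw [hQentry, if_pos rfl]
      rcases hεpm i with h | h <;> rw [h] <;> decide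
    have hQzero : ∀ i j, j ≠ σ i → Q i j = 0 := by
      intro i j hj
      rw [hQentry, if_neg hj]
    have hQmono : IsMonomial Q := by
      constructor
      · intro i
        refine ⟨σ i, hQne i, ?_⟩
        intro j hj
        by_contra hne
        exact hj (hQzero i j hne)
      · intro j
        obtain ⟨i, rfl⟩ := hσbij.surjective j
        refine ⟨i, hQne i, ?_⟩
        intro k hk
        have h1 : σ i = σ k := by
          by_contra hne
          exact hk (hQzero k (σ i) hne)
        exact hσinj h1.symm
    have hyP : ∀ y ∈ L, y ᵥ* P ∈ L := by
      intro y hy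
      have : y ᵥ* P ∈ (fun x => Matrix.vecMul x P) '' (L : Set (Fin n → ℝ)) :=
        ⟨y, hy, rfl⟩
      rwa [hLP] at this
    have hpi : ∀ y ∈ L, piF f' (y ᵥ* P) = (piF f y) ᵥ* Q := by
      intro y hy
      funext j
      obtain ⟨i, rfl⟩ := hσbij.surjective j
      have hsum : ((piF f y) ᵥ* Q) (σ i) = piF f y i * ((ε i : ℤ) : ZMod 3) := by
        show ∑ k, piF f y k * Q k (σ i) = _
        rw [Finset.sum_eq_single i]
        · rw [hQentry, if_pos rfl]
        · intro k _ hk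
          rw [hQzero k (σ i) (fun h => hk (hσinj h.symm)), mul_zero]
        · intro h
          exact absurd (Finset.mem_univ i) h
      rw [hsum]
      obtain ⟨m, hm⟩ := hInt y hy (f i) (hf.1 i)
      have hipval : ip (y ᵥ* P) (f' (σ i)) = ((ε i * m : ℤ) : ℝ) := by
        have h1 : ip (y ᵥ* P) (f i ᵥ* P) = (m : ℝ) := by rw [hip]; exact hm
        have h2 : ip (y ᵥ* P) (f i ᵥ* P) = (ε i : ℝ) * ip (y ᵥ* P) (f' (σ i)) := by
          rw [hkey i, hipr]
        push_cast
        calc ip (y ᵥ* P) (f' (σ i))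
            = ((ε i : ℝ) * (ε i : ℝ)) * ip (y ᵥ* P) (f' (σ i)) := by rw [hεsq]; ring
          _ = (ε i : ℝ) * ip (y ᵥ* P) (f i ᵥ* P) := by rw [mul_assoc, ← h2]
          _ = (ε i : ℝ) * (m : ℝ) := by rw [h1]
      show ((⌊ip (y ᵥ* P) (f' (σ i))⌋ : ℤ) : ZMod 3) = _
      rw [hipval, Int.floor_intCast]
      have hpiyi : piF f y i = ((m : ℤ) : ZMod 3) := by
        show ((⌊ip y (f i)⌋ : ℤ) : ZMod 3) = _
        rw [hm, Int.floor_intCast]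
      rw [hpiyi]
      push_cast
      ring
    refine ⟨Q, hQmono, ?_⟩
    ext v
    constructor
    · rintro ⟨x, hx, rfl⟩
      have hx' : x ∈ (fun x => Matrix.vecMul x P) '' (L : Set (Fin n → ℝ)) := by
        rw [hLP]; exact hx
      obtain ⟨y, hy, rfl⟩ := hx'
      exact ⟨piF f y, ⟨y, hy, rfl⟩, (hpi y hy).symm⟩
    · rintro ⟨c, ⟨y, hy, rfl⟩, rfl⟩
      exact ⟨y ᵥ* P, hyP y hy, hpi y hy⟩

end Aux

/-- For an `n`-dimensional integral lattice `L` with 3-frames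
`F`, `F'`, the codes `π_F(L)` and `π_{F'}(L)` are equivalent iff there is an
orthogonal matrix `P ∈ Aut(L)` with `{±f₁,…,±fₙ}·P = {±f'₁,…,±f'ₙ}`. -/
theorem frame_codes_equivalent_iff (n : ℕ) (L : Submodule ℤ (Fin n → ℝ))
    (hInt : ∀ x ∈ L, ∀ y ∈ L, ∃ m : ℤ, ip x y = (m : ℝ))
    (f f' : Fin n → Fin n → ℝ)
    (hf : IsFrame (L : Set (Fin n → ℝ)) f)
    (hf' : IsFrame (L : Set (Fin n → ℝ)) f') :
    CodeEquiv (piF f '' (L : Set (Fin n → ℝ))) (piF f' '' (L : Set (Fin n → ℝ)))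
      ↔ ∃ P : Matrix (Fin n) (Fin n) ℝ, P.transpose * P = 1 ∧
          (fun x => Matrix.vecMul x P) '' (L : Set (Fin n → ℝ)) = (L : Set (Fin n → ℝ)) ∧
          (fun x => Matrix.vecMul x P) '' {x | ∃ i, x = f i ∨ x = -f i}
            = {x | ∃ i, x = f' i ∨ x = -f' i} := by
  exact frame_codes_equivalent_iff_aux hInt hf hf'

end Ternary
end

section
/- Let C be a ternary self-dual code of length n with minimum weight at least 6. Then C is decomposable if and only if the Construction A lattice A₃(C) is decomposable (an orthogonal direct sum of two nonzero sublattices). -/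
/-!
A splitting of `C` along a set `S` of coordinates gives the splitting of `A₃(C)` into its vectors
supported on `S` and on `Sᶜ`, which are orthogonal. Conversely, the frame vectors `√3 eᵢ` lie in
`A₃(C)` and have norm `3`, whereas minimum weight `6` makes every nonzero vector of `A₃(C)` have
norm at least `2`; so each `√3 eᵢ` lies in one of the two summands. This sorts the coordinates into
`S` and `Sᶜ`, each summand is supported on its side, and projecting onto `S` preserves `A₃(C)`,
hence `C`. Both halves of `C` are nonzero because a self-dual code of minimum weight at least `2`
has, at every coordinate, a codeword that is nonzero there.
-/

open scoped BigOperators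

namespace Ternary

-- `IsDecomposableCode C` unfolds to `∃ S, IsCoordinateSplit C S`.
def IsCoordinateSplit {ι R : Type*} [Zero R] (X : Set (ι → R)) (S : Set ι) : Prop :=
  (∃ x ∈ X, x ≠ 0 ∧ ∀ i ∉ S, x i = 0) ∧ (∃ x ∈ X, x ≠ 0 ∧ ∀ i ∈ S, x i = 0) ∧
    ∀ x ∈ X, S.indicator x ∈ X

section Lattice

variable {n : ℕ}

theorem ip_add_add_self (a b : Fin n → ℝ) :
    ip (a + b) (a + b) = ip a a + 2 * ip a b + ip b b := by
  simp only [ip, Pi.add_apply, Finset.mul_sum, ← Finset.sum_add_distrib]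
  exact Finset.sum_congr rfl fun i _ => by ring

theorem ip_single_left (v : Fin n → ℝ) (i : Fin n) (r : ℝ) : ip (Pi.single i r) v = r * v i :=
  single_dotProduct v r i

theorem ip_single_right (v : Fin n → ℝ) (i : Fin n) (r : ℝ) : ip v (Pi.single i r) = v i * r :=
  dotProduct_single v r i

theorem ip_eq_zero_of_disjoint_support {u v : Fin n → ℝ} {S : Set (Fin n)}
    (hu : ∀ i ∈ Sᶜ, u i = 0) (hv : ∀ i ∈ S, v i = 0) : ip u v = 0 :=
  Finset.sum_eq_zero fun i _ => by by_cases hi : i ∈ S <;> simp [hu, hv, hi]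

theorem eq_zero_or_eq_zero_of_ip_add_self_lt {a b : Fin n → ℝ} {m : ℝ} (hab : ip a b = 0)
    (ha : a ≠ 0 → m ≤ ip a a) (hb : b ≠ 0 → m ≤ ip b b) (hlt : ip (a + b) (a + b) < 2 * m) :
    a = 0 ∨ b = 0 := by
  by_contra! h
  have := ha h.1
  have := hb h.2
  rw [ip_add_add_self, hab] at hlt
  linarith

theorem isDecomposableLattice_of_isCoordinateSplit {L : Submodule ℤ (Fin n → ℝ)} {S : Set (Fin n)}
    (h : IsCoordinateSplit (L : Set (Fin n → ℝ)) S) :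
    IsDecomposableLattice (L : Set (Fin n → ℝ)) := by
  obtain ⟨⟨a, ha, ha0, haS⟩, ⟨b, hb, hb0, hbS⟩, hind⟩ := h
  have hind' : ∀ v ∈ L, Sᶜ.indicator v ∈ L := fun v hv => by
    rw [Set.indicator_compl]
    exact L.sub_mem hv (hind v hv)
  have hpi : ∀ (T : Set (Fin n)) v, v ∈ Submodule.pi T (fun _ => (⊥ : Submodule ℤ ℝ)) ↔
      ∀ i ∈ T, v i = 0 := by simp [Submodule.mem_pi]
  refine ⟨L ⊓ Submodule.pi Sᶜ (fun _ => ⊥), L ⊓ Submodule.pi S (fun _ => ⊥),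
    fun v hv => hv.1, fun v hv => hv.1, ⟨a, ⟨ha, (hpi _ a).2 haS⟩, ha0⟩,
    ⟨b, ⟨hb, (hpi _ b).2 hbS⟩, hb0⟩,
    fun u hu v hv => ip_eq_zero_of_disjoint_support ((hpi _ u).1 hu.2) ((hpi _ v).1 hv.2), ?_⟩
  · ext v
    constructor
    · intro hv
      refine ⟨S.indicator v, ⟨hind v hv, (hpi _ _).2 fun i hi => ?_⟩,
        Sᶜ.indicator v, ⟨hind' v hv, (hpi _ _).2 fun i hi => ?_⟩,
        (Set.indicator_self_add_compl S v).symm⟩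
      · simp [Set.indicator_of_notMem hi]
      · simp [Set.indicator_of_notMem (Set.notMem_compl_iff.2 hi)]
    · rintro ⟨u, hu, w, hw, rfl⟩
      exact L.add_mem hu.1 hw.1

theorem exists_isCoordinateSplit_of_isDecomposableLattice {L : Set (Fin n → ℝ)} {r m : ℝ}
    (hL : IsDecomposableLattice L) (hr : r ≠ 0) (hframe : ∀ i, Pi.single i r ∈ L)
    (hmin : ∀ v ∈ L, v ≠ 0 → m ≤ ip v v) (hrm : r * r < 2 * m) :
    ∃ S, IsCoordinateSplit L S := by
  obtain ⟨L₁, L₂, hL₁, hL₂, ⟨a₀, ha₀, ha₀0⟩, ⟨b₀, hb₀, hb₀0⟩, horth, hsum⟩ := hL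
  have hsplit : ∀ i, Pi.single i r ∈ L₁ ∨ Pi.single i r ∈ L₂ := by
    intro i
    obtain ⟨a, ha, b, hb, hab⟩ : Pi.single i r ∈ {x | ∃ a ∈ L₁, ∃ b ∈ L₂, x = a + b} :=
      hsum ▸ hframe i
    have hlt : ip (a + b) (a + b) < 2 * m := by simpa [← hab, ip_single_right] using hrm
    rcases eq_zero_or_eq_zero_of_ip_add_self_lt (horth a ha b hb) (hmin a (hL₁ ha))
      (hmin b (hL₂ hb)) hlt with rfl | rfl
    · exact Or.inr (by simpa [hab] using hb)
    · exact Or.inl (by simpa [hab] using ha)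
  set S := {i | Pi.single i r ∈ L₁}
  have hsupp₁ : ∀ a ∈ L₁, ∀ i ∉ S, a i = 0 := fun a ha i hi => by
    simpa [ip_single_right, hr] using horth a ha _ ((hsplit i).resolve_left hi)
  have hsupp₂ : ∀ b ∈ L₂, ∀ i ∈ S, b i = 0 := fun b hb i hi => by
    simpa [ip_single_left, hr] using horth _ hi b hb
  refine ⟨S, ⟨a₀, hL₁ ha₀, ha₀0, hsupp₁ a₀ ha₀⟩, ⟨b₀, hL₂ hb₀, hb₀0, hsupp₂ b₀ hb₀⟩,
    fun v hv => ?_⟩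
  obtain ⟨a, ha, b, hb, rfl⟩ : v ∈ {x | ∃ a ∈ L₁, ∃ b ∈ L₂, x = a + b} := hsum ▸ hv
  convert hL₁ ha using 1
  funext i
  by_cases hi : i ∈ S <;> simp [hi, hsupp₁ a ha, hsupp₂ b hb]

end Lattice

section Code

variable {n : ℕ}

theorem mem_dualCode {C : Set (Fin n → ZMod 3)} {x : Fin n → ZMod 3} :
    x ∈ dualCode C ↔ ∀ y ∈ C, x ⬝ᵥ y = 0 :=
  Iff.rfl

def dualCodeSubmodule (C : Set (Fin n → ZMod 3)) : Submodule (ZMod 3) (Fin n → ZMod 3) where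
  carrier := dualCode C
  zero_mem' y _ := zero_dotProduct y
  add_mem' {x z} hx hz := mem_dualCode.2 fun y hy => by
    rw [add_dotProduct, mem_dualCode.1 hx y hy, mem_dualCode.1 hz y hy, add_zero]
  smul_mem' c x hx := mem_dualCode.2 fun y hy => by
    rw [smul_dotProduct, mem_dualCode.1 hx y hy, smul_zero]

theorem wt_single {i : Fin n} {c : ZMod 3} (hc : c ≠ 0) : wt (Pi.single i c) = 1 := by
  rw [wt, Finset.card_eq_one]
  exact ⟨i, by ext j; by_cases hj : j = i <;> simp [hj, hc]⟩

theorem IsSelfDual.exists_apply_ne_zero {C : Set (Fin n → ZMod 3)} (hC : IsSelfDual C)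
    (hmin : ∀ x ∈ C, x ≠ 0 → 2 ≤ wt x) (i : Fin n) : ∃ x ∈ C, x i ≠ 0 := by
  by_contra! h
  have hsingle : Pi.single i 1 ∈ C := hC ▸ mem_dualCode.2 fun y hy => by
    rw [single_dotProduct, h y hy, mul_zero]
  have := hmin _ hsingle (by simp)
  rw [wt_single one_ne_zero] at this
  omega

theorem IsSelfDual.exists_ne_zero_of_indicator_mem {C : Set (Fin n → ZMod 3)} (hC : IsSelfDual C)
    (hmin : ∀ x ∈ C, x ≠ 0 → 2 ≤ wt x) {T : Set (Fin n)} (hT : ∀ x ∈ C, T.indicator x ∈ C)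
    {i : Fin n} (hi : i ∈ T) : ∃ x ∈ C, x ≠ 0 ∧ ∀ j ∉ T, x j = 0 := by
  obtain ⟨x, hx, hxi⟩ := hC.exists_apply_ne_zero hmin i
  exact ⟨T.indicator x, hT x hx, fun h => hxi (by simpa [hi] using congrFun h i),
    fun j hj => Set.indicator_of_notMem hj x⟩

end Code

section ConstructionA

variable {n : ℕ}

def reduceMod3 : (Fin n → ℤ) →+ (Fin n → ZMod 3) :=
  (Int.castAddHom (ZMod 3)).compLeft (Fin n)

noncomputable def castDivSqrt3 : (Fin n → ℤ) →+ (Fin n → ℝ) :=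
  AddMonoidHom.mk' (fun y i => (y i : ℝ) / √3) fun y z => by
    funext i
    simp [add_div]

@[simp] theorem reduceMod3_apply (y : Fin n → ℤ) (i : Fin n) : reduceMod3 y i = (y i : ZMod 3) :=
  rfl

@[simp] theorem castDivSqrt3_apply (y : Fin n → ℤ) (i : Fin n) :
    castDivSqrt3 y i = (y i : ℝ) / √3 :=
  rfl

theorem mem_A3 {C : Set (Fin n → ZMod 3)} {v : Fin n → ℝ} :
    v ∈ A3 C ↔ ∃ y, reduceMod3 y ∈ C ∧ v = castDivSqrt3 y :=
  Iff.rfl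

theorem reduceMod3_surjective : Function.Surjective (reduceMod3 (n := n)) :=
  fun x => ⟨fun i => (x i).val, funext fun i => by simp⟩

theorem castDivSqrt3_apply_eq_zero {y : Fin n → ℤ} {i : Fin n} :
    castDivSqrt3 y i = 0 ↔ y i = 0 := by
  simp

theorem castDivSqrt3_injective : Function.Injective (castDivSqrt3 (n := n)) :=
  fun y z h => funext fun i => by simpa using congrFun h i

theorem reduceMod3_indicator (S : Set (Fin n)) (y : Fin n → ℤ) :
    reduceMod3 (S.indicator y) = S.indicator (reduceMod3 y) := by
  funext i
  by_cases hi : i ∈ S <;> simp [hi]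

theorem castDivSqrt3_indicator (S : Set (Fin n)) (y : Fin n → ℤ) :
    castDivSqrt3 (S.indicator y) = S.indicator (castDivSqrt3 y) := by
  funext i
  by_cases hi : i ∈ S <;> simp [hi]

noncomputable def A3Subgroup (D : AddSubgroup (Fin n → ZMod 3)) : AddSubgroup (Fin n → ℝ) :=
  (D.comap reduceMod3).map castDivSqrt3

theorem coe_A3Subgroup (D : AddSubgroup (Fin n → ZMod 3)) :
    (A3Subgroup D : Set (Fin n → ℝ)) = A3 D := by
  ext v
  simp [A3Subgroup, mem_A3, eq_comm]

theorem single_sqrt_three_mem_A3 {C : Set (Fin n → ZMod 3)} (h0 : 0 ∈ C) (i : Fin n) :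
    Pi.single i √3 ∈ A3 C := by
  refine mem_A3.2 ⟨Pi.single i 3, ?_, ?_⟩
  · convert h0
    funext j
    by_cases hj : j = i
    · subst hj
      simpa using ZMod.natCast_self 3
    · simp [hj]
  · funext j
    by_cases hj : j = i <;> simp [hj]

theorem ip_castDivSqrt3_self (y : Fin n → ℤ) :
    ip (castDivSqrt3 y) (castDivSqrt3 y) = (∑ i, ((y i : ℤ) : ℝ) ^ 2) / 3 := by
  rw [ip, Finset.sum_div]
  refine Finset.sum_congr rfl fun i _ => ?_
  rw [castDivSqrt3_apply, div_mul_div_comm, Real.mul_self_sqrt (by norm_num), sq]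

theorem card_support_le_sum_sq (y : Fin n → ℤ) :
    ((Finset.univ.filter fun i => y i ≠ 0).card : ℤ) ≤ ∑ i, y i ^ 2 := by
  calc ((Finset.univ.filter fun i => y i ≠ 0).card : ℤ)
      = ∑ i ∈ Finset.univ.filter (fun i => y i ≠ 0), 1 := by simp
    _ ≤ ∑ i ∈ Finset.univ.filter (fun i => y i ≠ 0), y i ^ 2 :=
      Finset.sum_le_sum fun i hi => by
        have := Int.one_le_abs (Finset.mem_filter.1 hi).2
        nlinarith [sq_abs (y i)]
    _ ≤ ∑ i, y i ^ 2 :=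
      Finset.sum_le_sum_of_subset_of_nonneg (Finset.filter_subset _ _) fun i _ _ => sq_nonneg _

theorem le_ip_self_of_mem_A3 {C : Set (Fin n → ZMod 3)} {d : ℕ} (hd : d ≤ 9)
    (hmin : ∀ x ∈ C, x ≠ 0 → d ≤ wt x) {v : Fin n → ℝ} (hv : v ∈ A3 C) (hv0 : v ≠ 0) :
    (d : ℝ) / 3 ≤ ip v v := by
  obtain ⟨y, hy, rfl⟩ := mem_A3.1 hv
  rw [ip_castDivSqrt3_self]
  suffices (d : ℤ) ≤ ∑ i, y i ^ 2 by gcongr; exact_mod_cast this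
  by_cases hy0 : reduceMod3 y = 0
  · obtain ⟨i, hi⟩ : ∃ i, y i ≠ 0 := by
      by_contra! h
      exact hv0 (funext fun i => by simp [h i])
    obtain ⟨k, hk⟩ : (3 : ℤ) ∣ y i := (ZMod.intCast_zmod_eq_zero_iff_dvd _ 3).1 (congrFun hy0 i)
    have hk0 : k ≠ 0 := by rintro rfl; exact hi hk
    calc (d : ℤ) ≤ 9 := by exact_mod_cast hd
      _ ≤ y i ^ 2 := by rw [hk]; nlinarith [Int.one_le_abs hk0, sq_abs k]
      _ ≤ ∑ j, y j ^ 2 := Finset.single_le_sum (fun j _ => sq_nonneg (y j)) (Finset.mem_univ i)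
  · calc (d : ℤ) ≤ wt (reduceMod3 y) := by exact_mod_cast hmin _ hy hy0
      _ ≤ (Finset.univ.filter fun i => y i ≠ 0).card := by
        refine Nat.cast_le.2 (Finset.card_le_card fun i hi => ?_)
        simp only [Finset.mem_filter] at hi ⊢
        exact ⟨hi.1, fun h => hi.2 (by simp [h])⟩
      _ ≤ ∑ i, y i ^ 2 := card_support_le_sum_sq y

theorem exists_mem_A3_apply_eq_zero_iff {C : Set (Fin n → ZMod 3)} {x : Fin n → ZMod 3}
    (hx : x ∈ C) : ∃ v ∈ A3 C, ∀ i, v i = 0 ↔ x i = 0 := by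
  refine ⟨castDivSqrt3 fun i => ((x i).val : ℤ), mem_A3.2 ⟨_, ?_, rfl⟩, fun i => ?_⟩
  · convert hx
    funext i
    simp
  · rw [castDivSqrt3_apply_eq_zero, Int.natCast_eq_zero, ZMod.val_eq_zero]

theorem indicator_mem_A3_iff {C : Set (Fin n → ZMod 3)} {S : Set (Fin n)} :
    (∀ v ∈ A3 C, S.indicator v ∈ A3 C) ↔ ∀ x ∈ C, S.indicator x ∈ C := by
  constructor
  · intro h x hx
    obtain ⟨y, rfl⟩ := reduceMod3_surjective x
    obtain ⟨z, hz, hzy⟩ := mem_A3.1 (h _ (mem_A3.2 ⟨y, hx, rfl⟩))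
    rw [← castDivSqrt3_indicator] at hzy
    rwa [← reduceMod3_indicator, castDivSqrt3_injective hzy]
  · intro h v hv
    obtain ⟨y, hy, rfl⟩ := mem_A3.1 hv
    exact mem_A3.2 ⟨S.indicator y, reduceMod3_indicator S y ▸ h _ hy,
      (castDivSqrt3_indicator S y).symm⟩

theorem isCoordinateSplit_A3_iff {D : AddSubgroup (Fin n → ZMod 3)}
    (hD : IsSelfDual (D : Set (Fin n → ZMod 3))) (hmin : ∀ x ∈ D, x ≠ 0 → 2 ≤ wt x)
    {S : Set (Fin n)} :
    IsCoordinateSplit (A3 D) S ↔ IsCoordinateSplit (D : Set (Fin n → ZMod 3)) S := by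
  constructor
  · rintro ⟨⟨a, -, ha0, haS⟩, ⟨b, -, hb0, hbS⟩, hind⟩
    have hindD := indicator_mem_A3_iff.1 hind
    have hindD' : ∀ x ∈ D, Sᶜ.indicator x ∈ D := fun x hx => by
      rw [Set.indicator_compl]
      exact D.sub_mem hx (hindD x hx)
    obtain ⟨i, hai⟩ := Function.ne_iff.1 ha0
    obtain ⟨j, hbj⟩ := Function.ne_iff.1 hb0
    obtain ⟨x, hx, hx0, hxS⟩ := hD.exists_ne_zero_of_indicator_mem hmin hindD
      (show i ∈ S from by_contra fun hi => hai (haS i hi))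
    obtain ⟨z, hz, hz0, hzS⟩ := hD.exists_ne_zero_of_indicator_mem hmin hindD'
      (show j ∈ Sᶜ from fun hj => hbj (hbS j hj))
    exact ⟨⟨x, hx, hx0, hxS⟩, ⟨z, hz, hz0, fun k hk => hzS k (not_not_intro hk)⟩, hindD⟩
  · rintro ⟨⟨x, hx, hx0, hxS⟩, ⟨z, hz, hz0, hzS⟩, hind⟩
    obtain ⟨a, ha, hax⟩ := exists_mem_A3_apply_eq_zero_iff hx
    obtain ⟨b, hb, hbz⟩ := exists_mem_A3_apply_eq_zero_iff hz
    exact ⟨⟨a, ha, fun h => hx0 (funext fun i => (hax i).1 (congrFun h i)),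
        fun i hi => (hax i).2 (hxS i hi)⟩,
      ⟨b, hb, fun h => hz0 (funext fun i => (hbz i).1 (congrFun h i)),
        fun i hi => (hbz i).2 (hzS i hi)⟩,
      indicator_mem_A3_iff.2 hind⟩

end ConstructionA

/-- A ternary self-dual code `C` of length `n` with minimum
weight at least 6 is decomposable iff `A₃(C)` is decomposable. -/
theorem decomposable_iff_A3_decomposable (n : ℕ) (C : Set (Fin n → ZMod 3))
    (hC : IsSelfDual C) (hmin : ∀ x ∈ C, x ≠ 0 → 6 ≤ wt x) :
    IsDecomposableCode C ↔ IsDecomposableLattice (A3 C) := by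
  obtain ⟨D, rfl⟩ : ∃ D : AddSubgroup (Fin n → ZMod 3), (D : Set (Fin n → ZMod 3)) = C :=
    ⟨(dualCodeSubmodule C).toAddSubgroup, hC⟩
  have hsplit (S : Set (Fin n)) :
      IsCoordinateSplit (A3 D) S ↔ IsCoordinateSplit (D : Set (Fin n → ZMod 3)) S :=
    isCoordinateSplit_A3_iff hC fun x hx hx0 => (hmin x hx hx0).trans' (by norm_num)
  constructor
  · rintro ⟨S, hS⟩
    rw [← coe_A3Subgroup, ← AddSubgroup.coe_toIntSubmodule] at hsplit ⊢
    exact isDecomposableLattice_of_isCoordinateSplit ((hsplit S).2 hS)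
  · intro hL
    obtain ⟨S, hS⟩ := exists_isCoordinateSplit_of_isDecomposableLattice hL
      (Real.sqrt_ne_zero'.2 (by norm_num)) (single_sqrt_three_mem_A3 D.zero_mem)
      (fun v hv hv0 => le_ip_self_of_mem_A3 (d := 6) (by norm_num) hmin hv hv0)
      (by rw [Real.mul_self_sqrt (by norm_num)]; norm_num)
    exact ⟨S, (hsplit S).1 hS⟩

end Ternary
end

section
/- Let C be a ternary self-dual code of length n ≡ 0 (mod 12) with 𝟏 ∈ C, and let v = (v₁,…,vₙ) be a codeword of weight n in C. Let P be the real diagonal matrix whose diagonal entries are the entries of v regarded as elements of {±1} ⊂ ℤ. Then L_S(C)·P = L_S(C·P̄) if Πᵢ vᵢ = 1, and L_S(C)·P = L_T(C·P̄) otherwise, where P̄ is the monomial matrix over 𝔽₃ obtained by reducing P modulo 3. -/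
open scoped BigOperators

namespace Ternary

/-! ### Auxiliary lemmas -/

lemma sqrt3_sq : Real.sqrt 3 * Real.sqrt 3 = 3 := Real.mul_self_sqrt (by norm_num)
lemma sqrt3_ne : Real.sqrt 3 ≠ 0 := by positivity

lemma combo_mem {n : ℕ} {C : Set (Fin n → ZMod 3)} (hC : IsSelfDual C)
    (a b : ZMod 3) {x y : Fin n → ZMod 3} (hx : x ∈ C) (hy : y ∈ C) :
    (fun i => a * x i + b * y i) ∈ C := by
  rw [← hC] at hx hy ⊢
  intro w hw
  have h1 : ∑ i, (a * x i + b * y i) * w i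
      = a * (∑ i, x i * w i) + b * (∑ i, y i * w i) := by
    rw [Finset.mul_sum, Finset.mul_sum, ← Finset.sum_add_distrib]
    exact Finset.sum_congr rfl fun i _ => by ring
  rw [h1, hx w hw, hy w hw, mul_zero, mul_zero, add_zero]

lemma pairSum {n : ℕ} {C : Set (Fin n → ZMod 3)} (hC : IsSelfDual C)
    {x y : Fin n → ZMod 3} (hx : x ∈ C) (hy : y ∈ C) :
    ∑ i, x i * y i = 0 := by
  rw [← hC] at hx; exact hx y hy

lemma dvd3_sum {n : ℕ} {y1 y2 : Fin n → ℤ}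
    (h : ∑ i, ((y1 i : ZMod 3)) * ((y2 i : ZMod 3)) = 0) :
    (3 : ℤ) ∣ ∑ i, y1 i * y2 i := by
  have h2 := (ZMod.intCast_zmod_eq_zero_iff_dvd (∑ i, y1 i * y2 i) 3).mp ?_
  · exact_mod_cast h2
  · push_cast; exact h

lemma sum_expand {n : ℕ} (a b : Fin n → ℤ) (m : ℤ) :
    ∑ i, (a i + m * b i) * (a i + m * b i)
      = (∑ i, a i * a i) + 2*m*(∑ i, a i * b i) + m^2 * (∑ i, b i * b i) := by
  have h : ∀ i : Fin n, (a i + m * b i) * (a i + m * b i)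
      = a i * a i + 2*m*(a i * b i) + m^2*(b i * b i) := fun i => by ring
  simp only [h]
  rw [Finset.sum_add_distrib, Finset.sum_add_distrib, ← Finset.mul_sum, ← Finset.mul_sum]

lemma ipRep {n : ℕ} (y1 y2 : Fin n → ℤ) :
    ip (fun i => (y1 i : ℝ)/Real.sqrt 3) (fun i => (y2 i : ℝ)/Real.sqrt 3)
      = ((∑ i, y1 i * y2 i : ℤ) : ℝ)/3 := by
  unfold ip
  have h : ∀ i : Fin n, ((y1 i : ℝ)/Real.sqrt 3) * ((y2 i : ℝ)/Real.sqrt 3)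
      = ((y1 i * y2 i : ℤ) : ℝ)/3 := by
    intro i; rw [div_mul_div_comm, sqrt3_sq]; push_cast; ring
  simp only [h]
  rw [← Finset.sum_div]; push_cast; ring

lemma memB3 {n : ℕ} (D : Set (Fin n → ZMod 3)) (b : Fin n → ℝ) :
    b ∈ B3 D ↔ ∃ y : Fin n → ℤ, (fun i => ((y i : ZMod 3))) ∈ D ∧
      (6 : ℤ) ∣ (∑ i, y i * y i) ∧ b = fun i => (y i : ℝ)/Real.sqrt 3 := by
  constructor
  · rintro ⟨⟨y, hy, rfl⟩, m2, hm2⟩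
    refine ⟨y, hy, ⟨m2, ?_⟩, rfl⟩
    rw [ipRep, div_eq_iff (by norm_num : (3:ℝ) ≠ 0)] at hm2
    have h : ((∑ i, y i * y i : ℤ) : ℝ) = ((6 * m2 : ℤ) : ℝ) := by
      rw [hm2]; push_cast; ring
    exact_mod_cast h
  · rintro ⟨y, hy, ⟨m2, hm2⟩, rfl⟩
    refine ⟨⟨y, hy, rfl⟩, m2, ?_⟩
    rw [ipRep, hm2, div_eq_iff (by norm_num : (3:ℝ) ≠ 0)]; push_cast; ring

/-- Let `C` be a ternary self-dual code of length
`n ≡ 0 (mod 12)` with `𝟏 ∈ C` and let `v` be a codeword of weight `n`.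
With `P` the real diagonal matrix whose entries are the entries of `v`
regarded as elements of `{±1} ⊂ ℤ` (so that `P` reduces to the monomial
matrix `diagonal v` modulo 3), we have `L_S(C)·P = L_S(C·P̄)` if `∏ vᵢ = 1`
and `L_S(C)·P = L_T(C·P̄)` otherwise. -/
theorem straight_twisted_construction (n : ℕ) (hn : n % 12 = 0)
    (C : Set (Fin n → ZMod 3)) (hC : IsSelfDual C)
    (h1 : (fun _ => (1 : ZMod 3)) ∈ C)
    (v : Fin n → ZMod 3) (hv : v ∈ C) (hwt : wt v = n) :
    ((∏ i, (if v i = 1 then (1 : ℝ) else -1)) = 1 →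
      (fun x => Matrix.vecMul x
          (Matrix.diagonal fun i => if v i = 1 then (1 : ℝ) else -1)) '' LS C
        = LS (codeMul C (Matrix.diagonal v))) ∧
    ((∏ i, (if v i = 1 then (1 : ℝ) else -1)) ≠ 1 →
      (fun x => Matrix.vecMul x
          (Matrix.diagonal fun i => if v i = 1 then (1 : ℝ) else -1)) '' LS C
        = LT (codeMul C (Matrix.diagonal v))) := by

  classical
  have hs : Real.sqrt 3 * Real.sqrt 3 = 3 := sqrt3_sq
  have hs0 : Real.sqrt 3 ≠ 0 := sqrt3_ne
  -- v has no zero entry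
  have hvne : ∀ i, v i ≠ 0 := by
    have hwt' : (Finset.filter (fun i => v i ≠ 0) Finset.univ).card = n := hwt
    have hcard : Finset.filter (fun i => v i ≠ 0) Finset.univ = Finset.univ := by
      apply Finset.eq_univ_of_card
      rw [hwt', Fintype.card_fin]
    intro i
    have hi : i ∈ Finset.filter (fun i => v i ≠ 0) Finset.univ := by
      rw [hcard]; exact Finset.mem_univ i
    exact (Finset.mem_filter.mp hi).2
  have hv2 : ∀ i, v i * v i = 1 := by
    have h : ∀ t : ZMod 3, t ≠ 0 → t * t = 1 := by decide
    exact fun i => h _ (hvne i)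
  have hvtwo : ∀ i, v i ≠ 1 → v i = 2 := by
    have h : ∀ t : ZMod 3, t ≠ 0 → t ≠ 1 → t = 2 := by decide
    exact fun i => h _ (hvne i)
  have hε2 : ∀ i, (if v i = 1 then (1:ℝ) else -1) * (if v i = 1 then (1:ℝ) else -1) = 1 := by
    intro i; by_cases h : v i = 1 <;> simp [h]
  have hεcast : ∀ i, (((if v i = 1 then (1:ℤ) else -1) : ℤ) : ℝ)
      = (if v i = 1 then (1:ℝ) else -1) := by
    intro i; by_cases h : v i = 1 <;> simp [h]
  have hη2 : ∀ i, (if v i = 1 then (1:ℤ) else -1) * (if v i = 1 then (1:ℤ) else -1) = 1 := by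
    intro i; by_cases h : v i = 1 <;> simp [h]
  have hηv : ∀ i, (((if v i = 1 then (1:ℤ) else -1) : ℤ) : ZMod 3) = v i := by
    intro i; by_cases h : v i = 1
    · rw [if_pos h, h]; decide
    · rw [if_neg h, hvtwo i h]; decide
  -- membership in the transformed code
  have memC' : ∀ x : Fin n → ZMod 3,
      x ∈ codeMul C (Matrix.diagonal v) ↔ (fun i => x i * v i) ∈ C := by
    intro x; constructor
    · rintro ⟨c0, hc0, rfl⟩
      have h : (fun i => Matrix.vecMul c0 (Matrix.diagonal v) i * v i) = c0 := by
        funext i; rw [Matrix.vecMul_diagonal, mul_assoc, hv2 i, mul_one]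
      rw [h]; exact hc0
    · intro h
      refine ⟨fun i => x i * v i, h, ?_⟩
      show Matrix.vecMul (fun i => x i * v i) (Matrix.diagonal v) = x
      funext i; rw [Matrix.vecMul_diagonal, mul_assoc, hv2 i, mul_one]
  have pairC' : ∀ x y : Fin n → ZMod 3, x ∈ codeMul C (Matrix.diagonal v) →
      y ∈ codeMul C (Matrix.diagonal v) → ∑ i, x i * y i = 0 := by
    intro x y hx hy
    have hx' := (memC' x).mp hx
    have hy' := (memC' y).mp hy
    have h : ∀ i, x i * y i = (x i * v i) * (y i * v i) := by
      intro i; rw [mul_mul_mul_comm, hv2 i, mul_one]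
    calc ∑ i, x i * y i = ∑ i, (x i * v i) * (y i * v i) :=
          Finset.sum_congr rfl fun i _ => h i
      _ = 0 := pairSum hC hx' hy'
  have comboC' : ∀ (p r : Fin n → ZMod 3) (q : ZMod 3),
      p ∈ codeMul C (Matrix.diagonal v) → r ∈ codeMul C (Matrix.diagonal v) →
      (fun i => p i + q * r i) ∈ codeMul C (Matrix.diagonal v) := by
    intro p r q hp hr
    rw [memC'] at hp hr ⊢
    have h : (fun i => (p i + q * r i) * v i)
        = fun i => 1 * (p i * v i) + q * (r i * v i) := by funext i; ring
    rw [h]; exact combo_mem hC 1 q hp hr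
  -- the 0/1 indicator of the (-1)-coordinates lies in C'
  have hz : (fun i => (((if v i = 1 then (0:ℤ) else 1) : ℤ) : ZMod 3))
      ∈ codeMul C (Matrix.diagonal v) := by
    rw [memC']
    have h : (fun i => (((if v i = 1 then (0:ℤ) else 1) : ℤ) : ZMod 3) * v i)
        = fun i => 1 * (1:ZMod 3) + 2 * v i := by
      funext i
      by_cases hvi : v i = 1
      · rw [if_pos hvi, hvi]; decide
      · rw [if_neg hvi, hvtwo i hvi]; decide
    rw [h]; exact combo_mem hC 1 2 h1 hv
  have hk3 : (3:ℤ) ∣ ∑ i, (if v i = 1 then (0:ℤ) else 1) * (if v i = 1 then (0:ℤ) else 1) :=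
    dvd3_sum (pairC' _ _ hz hz)
  have hkcard : (∑ i, (if v i = 1 then (0:ℤ) else 1) * (if v i = 1 then (0:ℤ) else 1))
      = ((Finset.filter (fun i => ¬ v i = 1) Finset.univ).card : ℤ) := by
    have h : ∀ i : Fin n, (if v i = 1 then (0:ℤ) else 1) * (if v i = 1 then (0:ℤ) else 1)
        = (if v i = 1 then 0 else 1) := by
      intro i; by_cases hvi : v i = 1 <;> simp [hvi]
    simp only [h]
    rw [Finset.sum_ite, Finset.sum_const, Finset.sum_const]
    simp
  have hprod : (∏ i, (if v i = 1 then (1:ℝ) else -1))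
      = (-1:ℝ)^((Finset.filter (fun i => ¬ v i = 1) Finset.univ).card) := by
    rw [Finset.prod_ite]
    simp [Finset.prod_const]
  -- the main computation
  have main : ∀ (g : Fin n → ℝ) (u : Fin n → ℤ),
      (∀ i, (2*Real.sqrt 3)⁻¹ * (if v i = 1 then (1:ℝ) else -1)
          = g i - (u i : ℝ)/Real.sqrt 3) →
      ((fun i => ((u i : ZMod 3))) ∈ codeMul C (Matrix.diagonal v)) →
      ((6:ℤ) ∣ ∑ i, u i * u i) →
      ((fun x => Matrix.vecMul x
          (Matrix.diagonal fun i => if v i = 1 then (1 : ℝ) else -1)) '' LS C)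
        = {x | ∃ (m : ℤ) (b : Fin n → ℝ), b ∈ B3 (codeMul C (Matrix.diagonal v)) ∧
            x = (m : ℝ) • g + b} := by
    intro g u hgu hu h6u
    have hp' : ∀ (y : Fin n → ℤ), (fun i => ((y i : ZMod 3))) ∈ C →
        (fun i => ((y i : ZMod 3)) * v i) ∈ codeMul C (Matrix.diagonal v) := by
      intro y hy
      rw [memC']
      have h : (fun i => (((y i : ZMod 3)) * v i) * v i) = fun i => ((y i : ZMod 3)) := by
        funext i; rw [mul_assoc, hv2 i, mul_one]
      rw [h]; exact hy
    ext x
    simp only [Set.mem_image, Set.mem_setOf_eq]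
    constructor
    · rintro ⟨x₀, hx₀, rfl⟩
      obtain ⟨m, b, hb, rfl⟩ := hx₀
      rw [memB3] at hb
      obtain ⟨y, hy, h6y, rfl⟩ := hb
      refine ⟨m, fun i => ((y i * (if v i = 1 then (1:ℤ) else -1) - m * u i : ℤ) : ℝ)/Real.sqrt 3,
        ?_, ?_⟩
      · rw [memB3]
        refine ⟨fun i => y i * (if v i = 1 then (1:ℤ) else -1) - m * u i, ?_, ?_, rfl⟩
        · have hmem := comboC' _ _ (((-m : ℤ) : ZMod 3)) (hp' y hy) hu
          have hcasts : (fun i => (((y i * (if v i = 1 then (1:ℤ) else -1) - m * u i : ℤ)) : ZMod 3))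
              = fun i => ((y i : ZMod 3)) * v i + (((-m : ℤ) : ZMod 3)) * ((u i : ZMod 3)) := by
            funext i; push_cast [hηv i]; ring
          rw [hcasts]; exact hmem
        · have hT : (3:ℤ) ∣ ∑ i, (y i * (if v i = 1 then (1:ℤ) else -1)) * u i := by
            apply dvd3_sum
            have h : ∀ i : Fin n, ((y i * (if v i = 1 then (1:ℤ) else -1) : ℤ) : ZMod 3)
                = ((y i : ZMod 3)) * v i := by
              intro i; push_cast [hηv i]; ring
            calc ∑ i, ((y i * (if v i = 1 then (1:ℤ) else -1) : ℤ) : ZMod 3) * ((u i : ZMod 3))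
                = ∑ i, (((y i : ZMod 3)) * v i) * ((u i : ZMod 3)) :=
                  Finset.sum_congr rfl fun i _ => by rw [h i]
              _ = 0 := pairC' _ _ (hp' y hy) hu
          have haa : (∑ i, (y i * (if v i = 1 then (1:ℤ) else -1))
                * (y i * (if v i = 1 then (1:ℤ) else -1))) = ∑ i, y i * y i :=
            Finset.sum_congr rfl fun i _ => by
              rw [mul_mul_mul_comm, hη2 i, mul_one]
          have hre : (∑ i, (y i * (if v i = 1 then (1:ℤ) else -1) - m * u i)
                * (y i * (if v i = 1 then (1:ℤ) else -1) - m * u i))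
              = (∑ i, y i * y i) + 2*(-m)*(∑ i, (y i * (if v i = 1 then (1:ℤ) else -1)) * u i)
                + (-m)^2 * (∑ i, u i * u i) := by
            rw [← haa, ← sum_expand]
            exact Finset.sum_congr rfl fun i _ => by ring
          rw [hre]
          obtain ⟨t1, ht1⟩ := h6y
          obtain ⟨t2, ht2⟩ := hT
          obtain ⟨t3, ht3⟩ := h6u
          exact ⟨t1 - m*t2 + m^2*t3, by rw [ht1, ht2, ht3]; ring⟩
      · funext i
        rw [Matrix.vecMul_diagonal]
        simp only [Pi.add_apply, Pi.smul_apply, smul_eq_mul]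
        rw [show allOnesR n i = 1 from rfl]
        have hg : g i = (2*Real.sqrt 3)⁻¹ * (if v i = 1 then (1:ℝ) else -1)
            + (u i : ℝ)/Real.sqrt 3 := by rw [hgu i]; ring
        rw [hg]
        push_cast [hεcast i]
        ring
    · rintro ⟨m, b, hb, rfl⟩
      rw [memB3] at hb
      obtain ⟨y, hy, h6y, rfl⟩ := hb
      refine ⟨(m:ℝ) • ((2*Real.sqrt 3)⁻¹ • allOnesR n)
        + (fun i => (((y i + m * u i) * (if v i = 1 then (1:ℤ) else -1) : ℤ) : ℝ)/Real.sqrt 3),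
        ⟨m, _, ?_, rfl⟩, ?_⟩
      · rw [memB3]
        refine ⟨fun i => (y i + m * u i) * (if v i = 1 then (1:ℤ) else -1), ?_, ?_, rfl⟩
        · have hmem := comboC' _ _ ((m : ℤ) : ZMod 3) hy hu
          rw [memC'] at hmem
          have hcasts : (fun i => (((y i + m * u i) * (if v i = 1 then (1:ℤ) else -1) : ℤ) : ZMod 3))
              = fun i => (((y i : ZMod 3)) + ((m : ℤ) : ZMod 3) * ((u i : ZMod 3))) * v i := by
            funext i; push_cast [hηv i]; ring
          rw [hcasts]; exact hmem
        · have hT : (3:ℤ) ∣ ∑ i, y i * u i := dvd3_sum (pairC' _ _ hy hu)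
          have hre : (∑ i, ((y i + m * u i) * (if v i = 1 then (1:ℤ) else -1))
                * ((y i + m * u i) * (if v i = 1 then (1:ℤ) else -1)))
              = (∑ i, y i * y i) + 2*m*(∑ i, y i * u i) + m^2 * (∑ i, u i * u i) := by
            rw [← sum_expand]
            refine Finset.sum_congr rfl fun i _ => ?_
            rw [mul_mul_mul_comm, hη2 i, mul_one]
          rw [hre]
          obtain ⟨t1, ht1⟩ := h6y
          obtain ⟨t2, ht2⟩ := hT
          obtain ⟨t3, ht3⟩ := h6u
          exact ⟨t1 + m*t2 + m^2*t3, by rw [ht1, ht2, ht3]; ring⟩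
      · funext i
        rw [Matrix.vecMul_diagonal]
        simp only [Pi.add_apply, Pi.smul_apply, smul_eq_mul]
        rw [show allOnesR n i = 1 from rfl]
        have hg : g i = (2*Real.sqrt 3)⁻¹ * (if v i = 1 then (1:ℝ) else -1)
            + (u i : ℝ)/Real.sqrt 3 := by rw [hgu i]; ring
        rw [hg]
        push_cast [hεcast i]
        linear_combination (((y i : ℝ) + (m:ℝ) * (u i : ℝ))/Real.sqrt 3) * hε2 i

  constructor
  · intro hPi
    have hkeven : Even ((Finset.filter (fun i => ¬ v i = 1) Finset.univ).card) := by
      rw [hprod] at hPi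
      exact (neg_one_pow_eq_one_iff_even (by norm_num : (-1:ℝ) ≠ 1)).mp hPi
    have h6K : (6:ℤ) ∣ ∑ i, (if v i = 1 then (0:ℤ) else 1) * (if v i = 1 then (0:ℤ) else 1) := by
      obtain ⟨a, ha⟩ := hkeven
      obtain ⟨b, hb⟩ := hk3
      omega
    have hgu : ∀ i, (2*Real.sqrt 3)⁻¹ * (if v i = 1 then (1:ℝ) else -1)
        = ((2*Real.sqrt 3)⁻¹ • allOnesR n) i
          - (((if v i = 1 then (0:ℤ) else 1) : ℤ):ℝ)/Real.sqrt 3 := by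
      intro i
      simp only [Pi.smul_apply, smul_eq_mul]
      rw [show allOnesR n i = 1 from rfl]
      by_cases hvi : v i = 1
      · rw [if_pos hvi, if_pos hvi]; norm_num
      · rw [if_neg hvi, if_neg hvi]
        push_cast
        field_simp
        ring
    exact main ((2*Real.sqrt 3)⁻¹ • allOnesR n) (fun i => if v i = 1 then (0:ℤ) else 1)
      hgu hz h6K
  · intro hPi
    have hkodd : ¬ Even ((Finset.filter (fun i => ¬ v i = 1) Finset.univ).card) := by
      intro h
      apply hPi
      rw [hprod]
      exact (neg_one_pow_eq_one_iff_even (by norm_num : (-1:ℝ) ≠ 1)).mpr h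
    obtain ⟨cc, hcc⟩ : Odd ((Finset.filter (fun i => ¬ v i = 1) Finset.univ).card) := by
      rcases Nat.even_or_odd ((Finset.filter (fun i => ¬ v i = 1) Finset.univ).card) with h | h
      · exact absurd h hkodd
      · exact h
    have hn0 : 0 < n := by
      have h2 : (Finset.filter (fun i => ¬ v i = 1) Finset.univ).card ≤ n :=
        le_trans (Finset.card_filter_le _ _) (by simp)
      omega
    have h30 : ((3:ℤ) : ZMod 3) = 0 := by decide
    have hival : (((⟨0, hn0⟩ : Fin n)) : ℕ) = 0 := rfl
    have hveq : ∀ i : Fin n, (i:ℕ) = 0 → i = (⟨0, hn0⟩ : Fin n) := by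
      intro i hi; exact Fin.ext (by rw [hi])
    have hgu : ∀ i, (2*Real.sqrt 3)⁻¹ * (if v i = 1 then (1:ℝ) else -1)
        = ((2*Real.sqrt 3)⁻¹ • allOnesR n - e1 n) i
          - ((((if v i = 1 then (0:ℤ) else 1) - (if (i:ℕ) = 0 then 3 else 0)) : ℤ):ℝ)/Real.sqrt 3 := by
      intro i
      simp only [Pi.sub_apply, Pi.smul_apply, smul_eq_mul]
      rw [show allOnesR n i = 1 from rfl,
        show e1 n i = (if (i:ℕ) = 0 then Real.sqrt 3 else 0) from rfl]
      push_cast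
      by_cases hi : (i:ℕ) = 0 <;> by_cases hvi : v i = 1 <;>
          simp only [hi, hvi, if_true, if_false, eq_self_iff_true, if_pos, if_neg,
            not_false_iff] <;> simp [hvi, hi] <;> field_simp <;>
        nlinarith [hs, Real.sqrt_nonneg 3]
    have hzodd : (fun i => ((((if v i = 1 then (0:ℤ) else 1)
          - (if (i:ℕ) = 0 then 3 else 0) : ℤ)) : ZMod 3))
        ∈ codeMul C (Matrix.diagonal v) := by
      have h : (fun i : Fin n => ((((if v i = 1 then (0:ℤ) else 1)
            - (if (i:ℕ) = 0 then 3 else 0) : ℤ)) : ZMod 3))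
          = fun i => (((if v i = 1 then (0:ℤ) else 1) : ℤ) : ZMod 3) := by
        funext i
        by_cases hi : (i:ℕ) = 0
        · rw [if_pos hi, Int.cast_sub, h30, sub_zero]
        · rw [if_neg hi, sub_zero]
      rw [h]; exact hz
    have hzw : (∑ i : Fin n, (if v i = 1 then (0:ℤ) else 1) * (if (i:ℕ) = 0 then 3 else 0))
        = 3 * (if v (⟨0, hn0⟩ : Fin n) = 1 then (0:ℤ) else 1) := by
      have h : ∀ i : Fin n, (if v i = 1 then (0:ℤ) else 1) * (if (i:ℕ) = 0 then 3 else 0)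
          = if i = (⟨0, hn0⟩ : Fin n) then 3 * (if v (⟨0, hn0⟩ : Fin n) = 1 then (0:ℤ) else 1) else 0 := by
        intro i
        by_cases hi : i = (⟨0, hn0⟩ : Fin n)
        · subst hi; rw [if_pos hival, if_pos rfl]; ring
        · rw [if_neg hi, if_neg (fun hcon => hi (hveq i hcon)), mul_zero]
      rw [Finset.sum_congr rfl fun i _ => h i, Finset.sum_ite_eq']
      simp
    have hww : (∑ i : Fin n, (if (i:ℕ) = 0 then (3:ℤ) else 0) * (if (i:ℕ) = 0 then 3 else 0))
        = 9 := by
      have h : ∀ i : Fin n, (if (i:ℕ) = 0 then (3:ℤ) else 0) * (if (i:ℕ) = 0 then 3 else 0)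
          = if i = (⟨0, hn0⟩ : Fin n) then (9:ℤ) else 0 := by
        intro i
        by_cases hi : i = (⟨0, hn0⟩ : Fin n)
        · subst hi; rw [if_pos hival, if_pos rfl]; ring
        · rw [if_neg hi, if_neg (fun hcon => hi (hveq i hcon)), mul_zero]
      rw [Finset.sum_congr rfl fun i _ => h i, Finset.sum_ite_eq']
      simp
    have hsum : (∑ i, ((if v i = 1 then (0:ℤ) else 1) - (if (i:ℕ) = 0 then 3 else 0))
          * ((if v i = 1 then (0:ℤ) else 1) - (if (i:ℕ) = 0 then 3 else 0)))
        = (∑ i, (if v i = 1 then (0:ℤ) else 1) * (if v i = 1 then (0:ℤ) else 1))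
          - 6 * (if v (⟨0, hn0⟩ : Fin n) = 1 then (0:ℤ) else 1) + 9 := by
      rw [Finset.sum_congr rfl (fun i _ => by ring :
        ∀ i ∈ Finset.univ, ((if v i = 1 then (0:ℤ) else 1) - (if (i:ℕ) = 0 then 3 else 0))
          * ((if v i = 1 then (0:ℤ) else 1) - (if (i:ℕ) = 0 then 3 else 0))
          = ((if v i = 1 then (0:ℤ) else 1) + (-1) * (if (i:ℕ) = 0 then 3 else 0))
          * ((if v i = 1 then (0:ℤ) else 1) + (-1) * (if (i:ℕ) = 0 then 3 else 0)))]
      rw [sum_expand, hzw, hww]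
      ring
    have h6u : (6:ℤ) ∣ ∑ i, ((if v i = 1 then (0:ℤ) else 1) - (if (i:ℕ) = 0 then 3 else 0))
        * ((if v i = 1 then (0:ℤ) else 1) - (if (i:ℕ) = 0 then 3 else 0)) := by
      rw [hsum]
      obtain ⟨b, hb⟩ := hk3
      rcases (show (if v (⟨0, hn0⟩ : Fin n) = 1 then (0:ℤ) else 1) = 0
          ∨ (if v (⟨0, hn0⟩ : Fin n) = 1 then (0:ℤ) else 1) = 1 from by
        by_cases h : v (⟨0, hn0⟩ : Fin n) = 1 <;> simp [h]) with h0 | h0 <;> rw [h0] <;> omega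
    exact main ((2*Real.sqrt 3)⁻¹ • allOnesR n - e1 n)
      (fun i => (if v i = 1 then (0:ℤ) else 1) - (if (i:ℕ) = 0 then 3 else 0)) hgu hzodd h6u


end Ternary
end

section
/- Every ternary self-dual code C of length n arises from a 3-frame of a unimodular lattice: the set F = {√3·e₁, …, √3·eₙ} of scaled standard basis vectors is a 3-frame of the Construction A lattice A₃(C), and π_F(A₃(C)) = C. -/
open scoped BigOperators

namespace Ternary

/-
The coordinates of `x = y / √3 ∈ A₃(C)` against the frame vectors `√3 eᵢ` are exactly the
integers `yᵢ`, so `π_F` undoes Construction A: `π_F(y / √3) = y mod 3`. Since reduction mod 3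
is surjective onto `𝔽₃ⁿ`, `π_F(A₃(C)) = C`. The frame vectors themselves are `(3eᵢ) / √3`, which
lie in `A₃(C)` because `3eᵢ ≡ 0` and a self-dual code contains `0`.
-/

theorem IsSelfDual.zero_mem {n : ℕ} {C : Set (Fin n → ZMod 3)} (hC : IsSelfDual C) :
    (0 : Fin n → ZMod 3) ∈ C := by
  rw [← hC]
  intro y _
  simp

theorem ip_ite_right {n : ℕ} (x : Fin n → ℝ) (i : Fin n) (a : ℝ) :
    ip x (fun j => if j = i then a else 0) = x i * a := by
  simp [ip, mul_ite]

section StandardFrame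

variable {n : ℕ}

noncomputable def stdFrame (n : ℕ) : Fin n → Fin n → ℝ :=
  fun i j => if j = i then Real.sqrt 3 else 0

noncomputable def divSqrtThree (y : Fin n → ℤ) : Fin n → ℝ :=
  fun i => (y i : ℝ) / Real.sqrt 3

def reduceModThree (y : Fin n → ℤ) : Fin n → ZMod 3 :=
  fun i => (y i : ZMod 3)

theorem reduceModThree_surjective : Function.Surjective (reduceModThree (n := n)) :=
  ZMod.intCast_surjective.comp_left

theorem A3_eq_image (C : Set (Fin n → ZMod 3)) :
    A3 C = divSqrtThree '' (reduceModThree ⁻¹' C) := by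
  ext v
  simp only [A3, Set.mem_ofPred_eq, Set.mem_image, Set.mem_preimage, eq_comm (a := v)]
  rfl

theorem ip_stdFrame (i j : Fin n) :
    ip (stdFrame n i) (stdFrame n j) = if i = j then 3 else 0 := by
  unfold stdFrame
  rw [ip_ite_right]
  by_cases h : i = j
  · subst h
    simp
  · simp [h, Ne.symm h]

theorem stdFrame_mem_A3 {C : Set (Fin n → ZMod 3)} (h0 : (0 : Fin n → ZMod 3) ∈ C) (i : Fin n) :
    stdFrame n i ∈ A3 C := by
  rw [A3_eq_image]
  refine ⟨fun k => if k = i then 3 else 0, ?_, ?_⟩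
  · show reduceModThree _ ∈ C
    convert h0 using 1
    ext k
    by_cases hk : k = i
    · simp only [reduceModThree, hk, if_true, Int.cast_ofNat, Pi.zero_apply]
      decide
    · simp [reduceModThree, hk]
  · ext k
    by_cases hk : k = i <;> simp [divSqrtThree, stdFrame, hk, Real.div_sqrt]

theorem piF_stdFrame_comp_divSqrtThree :
    piF (stdFrame n) ∘ divSqrtThree = reduceModThree := by
  ext y i
  have hsqrt : Real.sqrt 3 ≠ 0 := by positivity
  unfold piF stdFrame divSqrtThree reduceModThree
  rw [Function.comp_apply, ip_ite_right, div_mul_cancel₀ _ hsqrt, Int.floor_intCast]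

end StandardFrame

/-- Every ternary self-dual code `C` of length `n` arises from a
3-frame: `F = {√3·e₁, …, √3·eₙ}` is a 3-frame of `A₃(C)` and
`π_F(A₃(C)) = C`. -/
theorem selfdual_from_standard_frame (n : ℕ) (C : Set (Fin n → ZMod 3))
    (hC : IsSelfDual C) :
    IsFrame (A3 C) (fun i j => if j = i then Real.sqrt 3 else 0) ∧
    piF (fun i j => if j = i then Real.sqrt 3 else 0) '' A3 C = C := by
  change IsFrame (A3 C) (stdFrame n) ∧ piF (stdFrame n) '' A3 C = C
  refine ⟨⟨stdFrame_mem_A3 hC.zero_mem, ip_stdFrame⟩, ?_⟩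
  rw [A3_eq_image, ← Set.image_comp, piF_stdFrame_comp_divSqrtThree]
  exact Set.image_preimage_eq C reduceModThree_surjective

end Ternary
end
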